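/- arXiv:2604.27205 — 3 statements merged into one kernel-verified Lean document; each statement's English description precedes it below -/
import Mathlib

section
/- Assume additionally j* ≤ (n+1)/2. Let the Diaconis–Holmes–Neal sampler start at the basepoint j̃ = (+1, j*) and let T = inf{t ≥ 1 : X_t = j̃} be the first return time to j̃. Then the probability that T is finite and that exactly one flip or stationary move occurs before time T is at least (1/n)·((n−1)/n)^{4n−2j*−2}. -/
open scoped Classical

/-- One-step transition probability of the Diaconis–Holmes–Neal sampler on
`{+1,-1} × {1,…,n}` (a state `(ε, j)` is encoded as `(ε, j-1) : Bool × Fin n`,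
with `true` standing for `+1`). -/
noncomputable def dhnP (n : ℕ) (m : ℕ → ℝ) (s t : Bool × Fin n) : ℝ :=
  let θ : ℝ := 1 / n
  let j : ℕ := (s.2 : ℕ) + 1
  let jn : ℕ := if s.1 then j + 1 else j - 1
  let r : ℝ := min 1 (m jn / m j)
  (if t.1 = s.1 ∧ (t.2 : ℕ) + 1 = jn then (1 - θ) * r else 0) +
  (if t.1 ≠ s.1 ∧ t.2 = s.2 then (1 - θ) * (1 - r) else 0) +
  (if t.1 ≠ s.1 ∧ (t.2 : ℕ) + 1 = jn then θ * r else 0) +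
  (if t.1 = s.1 ∧ t.2 = s.2 then θ * (1 - r) else 0)

/-- A step of the chain from `u` to `v` is a *flip* (both sign and position change) or a
*stationary move* (`v = u`); otherwise it is a shift or a jump. -/
def flipOrStay {n : ℕ} (u v : Bool × Fin n) : Prop :=
  v = u ∨ (v.1 ≠ u.1 ∧ v.2 ≠ u.2)

set_option maxHeartbeats 1000000

lemma mnn (n : ℕ) (m : ℕ → ℝ) (hm0 : m 0 = 0) (hmtop : m (n + 1) = 0)
    (hpos : ∀ j, 1 ≤ j → j ≤ n → 0 < m j) : ∀ k, k ≤ n + 1 → 0 ≤ m k := by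
  intro k hk
  rcases Nat.eq_zero_or_pos k with h | h
  · simp [h, hm0]
  rcases eq_or_lt_of_le hk with h2 | h2
  · simp [h2, hmtop]
  · exact (hpos k h (by omega)).le

lemma ite_nonneg' (c : Prop) [Decidable c] (a : ℝ) (ha : 0 ≤ a) :
    0 ≤ if c then a else 0 := by split_ifs <;> simp [ha]

lemma dhnP_nonneg (n : ℕ) (hn : 3 ≤ n) (m : ℕ → ℝ) (hm0 : m 0 = 0)
    (hmtop : m (n + 1) = 0) (hpos : ∀ j, 1 ≤ j → j ≤ n → 0 < m j)
    (s t : Bool × Fin n) : 0 ≤ dhnP n m s t := by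
  have hnn := mnn n m hm0 hmtop hpos
  obtain ⟨b, x⟩ := s
  have hx := x.isLt
  unfold dhnP
  simp only []
  have hA : ∀ k, k ≤ n + 1 → 0 ≤ min 1 (m k / m ((x : ℕ) + 1)) := fun k hk =>
    le_min zero_le_one (div_nonneg (hnn k hk) (hpos _ (by omega) (by omega)).le)
  have hB : ∀ k, min 1 (m k / m ((x : ℕ) + 1)) ≤ 1 := fun k => min_le_left _ _
  have h1 : (0:ℝ) ≤ 1 - 1/n := by
    have : (1:ℝ)/n ≤ 1 := by
      rw [div_le_one (by positivity)]; exact_mod_cast by omega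
    linarith
  have hθ : (0:ℝ) ≤ 1/n := by positivity
  cases b <;>
  · simp only [Bool.false_eq_true, if_true, if_false]
    refine add_nonneg (add_nonneg (add_nonneg ?_ ?_) ?_) ?_ <;>
      refine ite_nonneg' _ _ ?_
    · exact mul_nonneg h1 (hA _ (by omega))
    · exact mul_nonneg h1 (by have := hB (if false then (x:ℕ)+1+1 else (x:ℕ)+1-1); linarith [hB ((x:ℕ)+1+1), hB ((x:ℕ)+1-1)])
    · exact mul_nonneg hθ (hA _ (by omega))
    · exact mul_nonneg hθ (by linarith [hB ((x:ℕ)+1+1), hB ((x:ℕ)+1-1)])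

lemma rowsum_aux (n : ℕ) (b : Bool) (x : Fin n) (jn : ℕ) (r θ : ℝ)
    (hjn : jn ≤ n + 1) (hr : ¬(1 ≤ jn ∧ jn ≤ n) → r = 0) :
    (∑ v : Bool × Fin n, ((if v.1 = b ∧ (v.2 : ℕ) + 1 = jn then (1-θ)*r else 0) +
      (if v.1 ≠ b ∧ v.2 = x then (1-θ)*(1-r) else 0) +
      (if v.1 ≠ b ∧ (v.2 : ℕ) + 1 = jn then θ*r else 0) +
      (if v.1 = b ∧ v.2 = x then θ*(1-r) else 0))) = 1 := by
  rw [Finset.sum_add_distrib, Finset.sum_add_distrib, Finset.sum_add_distrib]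
  have e2 : (∑ v : Bool × Fin n, if v.1 ≠ b ∧ v.2 = x then (1-θ)*(1-r) else 0)
      = (1-θ)*(1-r) := by
    rw [Finset.sum_congr rfl (fun v _ => if_congr (show (v.1 ≠ b ∧ v.2 = x) ↔ v = (!b, x) by
      obtain ⟨c, y⟩ := v; cases c <;> cases b <;> simp [Prod.ext_iff]) rfl rfl)]
    simp [Finset.sum_ite_eq' Finset.univ ((!b, x) : Bool × Fin n)]
  have e4 : (∑ v : Bool × Fin n, if v.1 = b ∧ v.2 = x then θ*(1-r) else 0)
      = θ*(1-r) := by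
    rw [Finset.sum_congr rfl (fun v _ => if_congr (show (v.1 = b ∧ v.2 = x) ↔ v = (b, x) by
      obtain ⟨c, y⟩ := v; simp [Prod.ext_iff]) rfl rfl)]
    simp [Finset.sum_ite_eq' Finset.univ ((b, x) : Bool × Fin n)]
  by_cases hj : 1 ≤ jn ∧ jn ≤ n
  · have hlt : jn - 1 < n := by omega
    have e1 : (∑ v : Bool × Fin n, if v.1 = b ∧ (v.2 : ℕ) + 1 = jn then (1-θ)*r else 0)
        = (1-θ)*r := by
      rw [Finset.sum_congr rfl (fun v _ => if_congr
        (show (v.1 = b ∧ (v.2 : ℕ) + 1 = jn) ↔ v = ((b, ⟨jn - 1, hlt⟩) : Bool × Fin n) by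
          obtain ⟨c, y⟩ := v
          constructor
          · rintro ⟨h1, h2⟩
            simp only [] at h1 h2
            have hy : y = (⟨jn - 1, hlt⟩ : Fin n) := Fin.ext (by simp only [Fin.val_mk]; omega)
            rw [h1, hy]
          · intro h
            injection h with h1 h2
            subst h1
            refine ⟨rfl, ?_⟩
            rw [h2]
            simp only [Fin.val_mk]
            omega) rfl rfl)]
      simp [Finset.sum_ite_eq' Finset.univ ((b, ⟨jn - 1, hlt⟩) : Bool × Fin n)]
    have e3 : (∑ v : Bool × Fin n, if v.1 ≠ b ∧ (v.2 : ℕ) + 1 = jn then θ*r else 0)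
        = θ*r := by
      rw [Finset.sum_congr rfl (fun v _ => if_congr
        (show (v.1 ≠ b ∧ (v.2 : ℕ) + 1 = jn) ↔ v = ((!b, ⟨jn - 1, hlt⟩) : Bool × Fin n) by
          obtain ⟨c, y⟩ := v
          constructor
          · rintro ⟨h1, h2⟩
            simp only [] at h1 h2
            have hy : y = (⟨jn - 1, hlt⟩ : Fin n) := Fin.ext (by simp only [Fin.val_mk]; omega)
            have hc : c = !b := by revert h1; cases c <;> cases b <;> simp
            rw [hc, hy]
          · intro h
            injection h with h1 h2
            subst h1
            refine ⟨by cases b <;> simp, ?_⟩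
            rw [h2]
            simp only [Fin.val_mk]
            omega) rfl rfl)]
      simp [Finset.sum_ite_eq' Finset.univ ((!b, ⟨jn - 1, hlt⟩) : Bool × Fin n)]
    rw [e1, e2, e3, e4]; ring
  · have e1 : (∑ v : Bool × Fin n, if v.1 = b ∧ (v.2 : ℕ) + 1 = jn then (1-θ)*r else 0)
        = 0 := Finset.sum_eq_zero fun v _ => if_neg (by
          rintro ⟨-, h2⟩; exact hj ⟨by omega, by have := v.2.isLt; omega⟩)
    have e3 : (∑ v : Bool × Fin n, if v.1 ≠ b ∧ (v.2 : ℕ) + 1 = jn then θ*r else 0)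
        = 0 := Finset.sum_eq_zero fun v _ => if_neg (by
          rintro ⟨-, h2⟩; exact hj ⟨by omega, by have := v.2.isLt; omega⟩)
    rw [e1, e2, e3, e4, hr hj]; ring

lemma dhnP_rowsum (n : ℕ) (hn : 3 ≤ n) (m : ℕ → ℝ) (hm0 : m 0 = 0)
    (hmtop : m (n + 1) = 0) (hpos : ∀ j, 1 ≤ j → j ≤ n → 0 < m j)
    (s : Bool × Fin n) : ∑ v : Bool × Fin n, dhnP n m s v = 1 := by
  obtain ⟨b, x⟩ := s
  have hx := x.isLt
  unfold dhnP
  simp only []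
  cases b
  · simp only [Bool.false_eq_true, if_false, Nat.add_sub_cancel]
    exact rowsum_aux n false x (x : ℕ) (min 1 (m (x : ℕ) / m ((x : ℕ) + 1))) (1/(n:ℝ))
      (by omega) (fun h => by
        have hx0 : (x : ℕ) = 0 := by omega
        rw [hx0, hm0]; norm_num)
  · simp only [if_true]
    exact rowsum_aux n true x ((x : ℕ) + 1 + 1) (min 1 (m ((x : ℕ)+1+1) / m ((x : ℕ) + 1))) (1/(n:ℝ))
      (by omega) (fun h => by
        have hx0 : (x : ℕ) + 1 + 1 = n + 1 := by omega
        rw [hx0, hmtop]; norm_num)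

lemma sum_snoc {α : Type*} [Fintype α] (M : ℕ) (F : (Fin (M + 1) → α) → ℝ) :
    ∑ w : Fin (M + 1) → α, F w = ∑ u : Fin M → α, ∑ s : α, F (Fin.snoc u s) := by
  rw [← (Fin.snocEquiv (fun _ => α)).sum_comp F]
  rw [Fintype.sum_prod_type]
  rw [Finset.sum_comm]
  apply Finset.sum_congr rfl
  intro u _
  apply Finset.sum_congr rfl
  intro s _
  congr 1

-- product along a path of length M+1 splits off last step
lemma prodsplit {α : Type*} (M : ℕ) (P : α → α → ℝ) (u : Fin (M + 1) → α) (s : α) :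
    (∏ i : Fin (M + 1), P ((Fin.snoc u s : Fin (M + 2) → α) i.castSucc)
        ((Fin.snoc u s : Fin (M + 2) → α) i.succ)) =
      (∏ i : Fin M, P (u i.castSucc) (u i.succ)) * P (u (Fin.last M)) s := by
  rw [Fin.prod_univ_castSucc]
  congr 1
  · apply Finset.prod_congr rfl
    intro i _
    congr 1
    · rw [show (i.castSucc.castSucc : Fin (M+2)) = ((i.castSucc).castSucc) from rfl,
        Fin.snoc_castSucc]
    · rw [Fin.succ_castSucc, Fin.snoc_castSucc]
  · congr 1
    · rw [Fin.snoc_castSucc]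
    · rw [show ((Fin.last M).succ : Fin (M+2)) = Fin.last (M+1) from rfl, Fin.snoc_last]

def Qnat {S : Type*} (jt : S) (t : ℕ) (g : ℕ → S) : Prop :=
  g 0 = jt ∧ g (t + 1) = jt ∧ ∀ l, 0 < l → l < t + 1 → g l ≠ jt

lemma Qnat_congr {S : Type*} (jt : S) (t : ℕ) (g g' : ℕ → S)
    (h : ∀ a, a ≤ t + 1 → g a = g' a) : Qnat jt t g ↔ Qnat jt t g' := by
  unfold Qnat
  rw [h 0 (by omega), h (t+1) (by omega)]
  constructor <;> rintro ⟨h1, h2, h3⟩ <;> refine ⟨h1, h2, fun l hl1 hl2 => ?_⟩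
  · rw [← h l (by omega)]; exact h3 l hl1 hl2
  · rw [h l (by omega)]; exact h3 l hl1 hl2

noncomputable def exf (n : ℕ) (m : ℕ → ℝ) (jt : Bool × Fin n) (t : ℕ) : ℝ :=
  ∑ w : Fin (t + 2) → Bool × Fin n,
    (if w 0 = jt ∧ w (Fin.last (t + 1)) = jt ∧
        (∀ l : Fin (t + 2), 0 < (l : ℕ) → (l : ℕ) < t + 1 → w l ≠ jt) ∧
        (Finset.univ.filter
          (fun i : Fin (t + 1) => flipOrStay (w i.castSucc) (w i.succ))).card = 1
     then ∏ i : Fin (t + 1), dhnP n m (w i.castSucc) (w i.succ) else 0)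

section
variable (n : ℕ) (hn : 3 ≤ n) (m : ℕ → ℝ) (hm0 : m 0 = 0) (hmtop : m (n + 1) = 0)
  (hpos : ∀ j, 1 ≤ j → j ≤ n → 0 < m j) (jt : Bool × Fin n)

include hn hm0 hmtop hpos in
lemma sumB : ∀ M : ℕ, (∑ w : Fin (M + 1) → Bool × Fin n,
    (if w 0 = jt then ∏ i : Fin M, dhnP n m (w i.castSucc) (w i.succ) else 0)) = 1 := by
  intro M
  induction M with
  | zero =>
    rw [Fintype.sum_equiv (Equiv.funUnique (Fin 1) (Bool × Fin n))
      _ (fun s => if s = jt then 1 else 0) (fun w => by simp [Equiv.funUnique])]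
    simp [Finset.sum_ite_eq' Finset.univ jt]
  | succ M IH =>
    rw [sum_snoc]
    rw [show (∑ u : Fin (M + 1) → Bool × Fin n, ∑ s : Bool × Fin n,
        (if (Fin.snoc u s : Fin (M + 2) → Bool × Fin n) 0 = jt then
          ∏ i : Fin (M + 1), dhnP n m ((Fin.snoc u s : Fin (M + 2) → Bool × Fin n) i.castSucc)
            ((Fin.snoc u s : Fin (M + 2) → Bool × Fin n) i.succ) else 0))
        = ∑ u : Fin (M + 1) → Bool × Fin n,
          (if u 0 = jt then ∏ i : Fin M, dhnP n m (u i.castSucc) (u i.succ) else 0) from ?_]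
    · exact IH
    apply Finset.sum_congr rfl
    intro u _
    have key : ∀ s : Bool × Fin n,
        (if (Fin.snoc u s : Fin (M + 2) → Bool × Fin n) 0 = jt then
          ∏ i : Fin (M + 1), dhnP n m ((Fin.snoc u s : Fin (M + 2) → Bool × Fin n) i.castSucc)
            ((Fin.snoc u s : Fin (M + 2) → Bool × Fin n) i.succ) else 0)
        = (if u 0 = jt then
            (∏ i : Fin M, dhnP n m (u i.castSucc) (u i.succ)) * dhnP n m (u (Fin.last M)) s
          else 0) := by
      intro s
      rw [prodsplit M (dhnP n m) u s]
      congr 1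
    rw [Finset.sum_congr rfl (fun s _ => key s)]
    by_cases h : u 0 = jt
    · simp only [h, if_true]
      rw [← Finset.mul_sum, dhnP_rowsum n hn m hm0 hmtop hpos, mul_one]
    · simp [h]

include hn hm0 hmtop hpos in
lemma prodnn {M : ℕ} (w : Fin (M + 1) → Bool × Fin n) :
    0 ≤ ∏ i : Fin M, dhnP n m (w i.castSucc) (w i.succ) :=
  Finset.prod_nonneg fun i _ => dhnP_nonneg n hn m hm0 hmtop hpos _ _

include hn hm0 hmtop hpos in
lemma sumR' (t M : ℕ) (h : t + 1 ≤ M) :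
    (∑ w : Fin (M + 1) → Bool × Fin n,
      (if Qnat jt t (fun a => w ⟨min a M, by omega⟩) then
        ∏ i : Fin M, dhnP n m (w i.castSucc) (w i.succ) else 0))
    = (∑ v : Fin (t + 2) → Bool × Fin n,
      (if Qnat jt t (fun a => v ⟨min a (t + 1), by omega⟩) then
        ∏ i : Fin (t + 1), dhnP n m (v i.castSucc) (v i.succ) else 0)) := by
  induction M, h using Nat.le_induction with
  | base => rfl
  | succ M hM IH =>
    rw [← IH, sum_snoc]
    apply Finset.sum_congr rfl
    intro u _
    have key : ∀ s : Bool × Fin n,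
        (if Qnat jt t (fun a => (Fin.snoc u s : Fin (M + 2) → Bool × Fin n)
            ⟨min a (M + 1), by omega⟩) then
          ∏ i : Fin (M + 1), dhnP n m ((Fin.snoc u s : Fin (M + 2) → Bool × Fin n) i.castSucc)
            ((Fin.snoc u s : Fin (M + 2) → Bool × Fin n) i.succ) else 0)
        = (if Qnat jt t (fun a => u ⟨min a M, by omega⟩) then
            (∏ i : Fin M, dhnP n m (u i.castSucc) (u i.succ)) * dhnP n m (u (Fin.last M)) s
          else 0) := by
      intro s
      rw [prodsplit M (dhnP n m) u s]
      refine if_congr (Qnat_congr jt t _ _ fun a ha => ?_) rfl rfl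
      have h1 : min a (M + 1) = a := by omega
      have h2 : min a M = a := by omega
      have : (⟨min a (M + 1), by omega⟩ : Fin (M + 2)) =
          ((⟨min a M, by omega⟩ : Fin (M + 1)) : Fin (M + 1)).castSucc := by
        apply Fin.ext; simp [h1, h2]
      rw [this, Fin.snoc_castSucc]
    rw [Finset.sum_congr rfl (fun s _ => key s)]
    by_cases h : Qnat jt t (fun a => u ⟨min a M, by omega⟩)
    · simp only [h, if_true]
      rw [← Finset.mul_sum, dhnP_rowsum n hn m hm0 hmtop hpos, mul_one]
    · simp [h]

include hn hm0 hmtop hpos in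
lemma inner_le (N : ℕ) (w : Fin (N + 1) → Bool × Fin n) :
    (∑ t ∈ Finset.range N,
      (if t + 1 ≤ N ∧ Qnat jt t (fun a => w ⟨min a N, by omega⟩) then
        ∏ i : Fin N, dhnP n m (w i.castSucc) (w i.succ) else 0))
    ≤ (if w 0 = jt then ∏ i : Fin N, dhnP n m (w i.castSucc) (w i.succ) else 0) := by
  set g : ℕ → Bool × Fin n := fun a => w ⟨min a N, by omega⟩ with hg
  set pp : ℝ := ∏ i : Fin N, dhnP n m (w i.castSucc) (w i.succ) with hpp
  have hppnn : 0 ≤ pp := prodnn n hn m hm0 hmtop hpos w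
  have hdisj : ∀ t t' : ℕ, t < t' → Qnat jt t g → Qnat jt t' g → False := by
    intro t t' htt ⟨_, h2, _⟩ ⟨_, _, h3'⟩
    exact h3' (t + 1) (by omega) (by omega) h2
  by_cases hex : ∃ t ∈ Finset.range N, (t + 1 ≤ N ∧ Qnat jt t g)
  · obtain ⟨t0, ht0, hQ0⟩ := hex
    rw [Finset.sum_eq_single_of_mem t0 ht0 ?side]
    case side =>
      intro b _ hb
      apply if_neg
      rintro ⟨-, hQb⟩
      rcases Nat.lt_or_ge b t0 with hlt | hge
      · exact hdisj b t0 hlt hQb hQ0.2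
      · exact hdisj t0 b (by omega) hQ0.2 hQb
    rw [if_pos hQ0]
    have hw0 : w 0 = jt := by
      have := hQ0.2.1
      have h0 : g 0 = w 0 := by
        show w ⟨min 0 N, _⟩ = w 0
        exact congrArg w (Fin.ext (by simp))
      rw [← h0]; exact this
    rw [if_pos hw0]
  · rw [Finset.sum_eq_zero]
    · split_ifs <;> [exact hppnn; exact le_refl 0]
    · intro t ht
      exact if_neg fun hc => hex ⟨t, ht, hc⟩

include hn hm0 hmtop hpos in
lemma partial_le (N : ℕ) : ∑ t ∈ Finset.range N, exf n m jt t ≤ 1 := by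
  calc ∑ t ∈ Finset.range N, exf n m jt t
      ≤ ∑ t ∈ Finset.range N, (∑ w : Fin (N + 1) → Bool × Fin n,
          (if t + 1 ≤ N ∧ Qnat jt t (fun a => w ⟨min a N, by omega⟩) then
            ∏ i : Fin N, dhnP n m (w i.castSucc) (w i.succ) else 0)) := by
        apply Finset.sum_le_sum
        intro t ht
        have htN : t + 1 ≤ N := by simp at ht; omega
        have step1 : exf n m jt t ≤
            (∑ v : Fin (t + 2) → Bool × Fin n,
              (if Qnat jt t (fun a => v ⟨min a (t + 1), by omega⟩) then
                ∏ i : Fin (t + 1), dhnP n m (v i.castSucc) (v i.succ) else 0)) := by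
          unfold exf
          apply Finset.sum_le_sum
          intro v _
          split_ifs with h1 h2
          · exact le_rfl
          · exfalso
            apply h2
            obtain ⟨ha, hb, hc, -⟩ := h1
            refine ⟨?_, ?_, ?_⟩
            · show v ⟨min 0 (t+1), _⟩ = jt
              rw [show (⟨min 0 (t+1), by omega⟩ : Fin (t + 2)) = 0 from Fin.ext (by simp)]
              exact ha
            · show v ⟨min (t+1) (t+1), _⟩ = jt
              rw [show (⟨min (t+1) (t+1), by omega⟩ : Fin (t + 2)) = Fin.last (t+1) from
                Fin.ext (by simp)]
              exact hb
            · intro l hl1 hl2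
              show v ⟨min l (t+1), _⟩ ≠ jt
              have hm : min l (t+1) = l := by omega
              exact hc ⟨min l (t+1), by omega⟩ (by simp [hm]; omega) (by simp [hm]; omega)
          · exact prodnn n hn m hm0 hmtop hpos v
          · exact le_rfl
        refine step1.trans ?_
        rw [← sumR' n hn m hm0 hmtop hpos jt t N htN]
        apply le_of_eq
        apply Finset.sum_congr rfl
        intro w _
        exact if_congr (Iff.symm (and_iff_right htN)) rfl rfl
    _ = ∑ w : Fin (N + 1) → Bool × Fin n, ∑ t ∈ Finset.range N,
          (if t + 1 ≤ N ∧ Qnat jt t (fun a => w ⟨min a N, by omega⟩) then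
            ∏ i : Fin N, dhnP n m (w i.castSucc) (w i.succ) else 0) := Finset.sum_comm
    _ ≤ ∑ w : Fin (N + 1) → Bool × Fin n,
          (if w 0 = jt then ∏ i : Fin N, dhnP n m (w i.castSucc) (w i.succ) else 0) :=
        Finset.sum_le_sum fun w _ => inner_le n hn m hm0 hmtop hpos jt N w
    _ = 1 := sumB n hn m hm0 hmtop hpos jt N

include hn hm0 hmtop hpos in
lemma exf_nonneg (t : ℕ) : 0 ≤ exf n m jt t := by
  unfold exf
  apply Finset.sum_nonneg
  intro w _
  split_ifs
  · exact prodnn n hn m hm0 hmtop hpos w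
  · exact le_rfl

include hn hm0 hmtop hpos in
lemma exf_summable : Summable (exf n m jt) :=
  summable_of_sum_range_le (exf_nonneg n hn m hm0 hmtop hpos jt)
    (partial_le n hn m hm0 hmtop hpos jt)
end

section
variable (n : ℕ) (m : ℕ → ℝ)

lemma dhnP_shift_up (x y : Fin n) (hy : (y : ℕ) = (x : ℕ) + 1) :
    dhnP n m (true, x) (true, y) =
      (1 - 1/(n:ℝ)) * min 1 (m ((x:ℕ) + 2) / m ((x:ℕ) + 1)) := by
  unfold dhnP
  norm_num [hy, Fin.ext_iff]

lemma dhnP_jump_up (x : Fin n) :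
    dhnP n m (true, x) (false, x) =
      (1 - 1/(n:ℝ)) * (1 - min 1 (m ((x:ℕ) + 2) / m ((x:ℕ) + 1))) := by
  unfold dhnP
  norm_num [Fin.ext_iff]

lemma dhnP_shift_down (x y : Fin n) (hy : (y : ℕ) + 1 = (x : ℕ)) :
    dhnP n m (false, x) (false, y) =
      (1 - 1/(n:ℝ)) * min 1 (m (x:ℕ) / m ((x:ℕ) + 1)) := by
  unfold dhnP
  norm_num [hy, Fin.ext_iff]
  intro h
  omega

lemma dhnP_flip_down (x y : Fin n) (hy : (y : ℕ) + 1 = (x : ℕ)) :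
    dhnP n m (false, x) (true, y) =
      (1/(n:ℝ)) * min 1 (m (x:ℕ) / m ((x:ℕ) + 1)) := by
  unfold dhnP
  norm_num [hy, Fin.ext_iff]
  intro h
  omega

lemma dhnP_stay_up (x : Fin n) :
    dhnP n m (true, x) (true, x) =
      (1/(n:ℝ)) * (1 - min 1 (m ((x:ℕ) + 2) / m ((x:ℕ) + 1))) := by
  unfold dhnP
  norm_num [Fin.ext_iff]
end

noncomputable def rho (m : ℕ → ℝ) (k : ℕ) : ℝ := min 1 (m (k + 1) / m k)

section
variable (n : ℕ) (hn : 3 ≤ n) (m : ℕ → ℝ) (hm0 : m 0 = 0) (hmtop : m (n + 1) = 0)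
  (hpos : ∀ j, 1 ≤ j → j ≤ n → 0 < m j)
  (jstar : ℕ) (hj1 : 1 ≤ jstar) (hj2 : jstar ≤ n)
  (hdown : ∀ j, jstar ≤ j → j < n → m (j + 1) ≤ m j)

include hn hm0 hmtop hpos hj1 hj2 hdown in
lemma path_bound (d : ℕ) (hd : d ≤ n - jstar) :
    (1/(n:ℝ)) * (1 - 1/(n:ℝ))^(2*d) *
      ((∏ i ∈ Finset.range d, rho m (jstar + i)) * (1 - rho m (jstar + d)))
    ≤ exf n m (true, ⟨jstar - 1, lt_of_lt_of_le (Nat.sub_lt hj1 Nat.one_pos) hj2⟩) (2*d) := by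
  set jt : Bool × Fin n := (true, ⟨jstar - 1, by omega⟩) with hjt
  set W : ℕ → Bool × Fin n := fun k =>
    if h1 : k ≤ d then (true, ⟨jstar - 1 + k, by omega⟩)
    else if h2 : k ≤ 2*d then (false, ⟨jstar + 2*d - k, by omega⟩)
    else (true, ⟨jstar - 1, by omega⟩) with hW
  have Wv1 : ∀ (k : ℕ) (hk : k ≤ d), W k = (true, ⟨jstar - 1 + k, by omega⟩) := by
    intro k hk
    rw [hW]; simp only []; rw [dif_pos hk]
  have Wv2 : ∀ (k : ℕ) (hk1 : d < k) (hk2 : k ≤ 2*d), W k = (false, ⟨jstar + 2*d - k, by omega⟩) := by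
    intro k hk1 hk2
    rw [hW]; simp only []; rw [dif_neg (by omega), dif_pos hk2]
  have Wv3 : ∀ (k : ℕ) (hk : 2*d < k), W k = (true, ⟨jstar - 1, by omega⟩) := by
    intro k hk
    rw [hW]; simp only []; rw [dif_neg (by omega), dif_neg (by omega)]
  set w : Fin (2*d + 2) → Bool × Fin n := fun i => W (i : ℕ) with hw
  have hred : ∀ i : Fin (2*d + 1), w i.castSucc = W (i : ℕ) ∧ w i.succ = W ((i : ℕ) + 1) :=
    fun i => ⟨by rw [hw]; simp only []; rw [Fin.coe_castSucc],
      by rw [hw]; simp only []; rw [Fin.val_succ]⟩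
  -- indicator condition
  have hC : w 0 = jt ∧ w (Fin.last (2*d + 1)) = jt ∧
      (∀ l : Fin (2*d + 2), 0 < (l : ℕ) → (l : ℕ) < 2*d + 1 → w l ≠ jt) ∧
      (Finset.univ.filter
        (fun i : Fin (2*d + 1) => flipOrStay (w i.castSucc) (w i.succ))).card = 1 := by
    refine ⟨?_, ?_, ?_, ?_⟩
    · show W ((0 : Fin (2*d + 2)) : ℕ) = jt
      rw [Fin.val_zero, Wv1 0 (by omega)]
      exact Prod.ext rfl (Fin.ext (by simp [hjt]))
    · show W ((Fin.last (2*d + 1) : Fin (2*d+2)) : ℕ) = jt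
      rw [Fin.val_last, Wv3 (2*d+1) (by omega)]
    · intro l hl1 hl2
      show W (l : ℕ) ≠ jt
      rcases le_or_gt (l : ℕ) d with h | h
      · rw [Wv1 _ h, hjt]
        simp only [ne_eq, Prod.mk.injEq, Fin.mk.injEq]
        rintro ⟨-, h2⟩; omega
      · rw [Wv2 _ h (by omega), hjt]
        simp [Prod.mk.injEq]
    · have hstepN : ∀ k : ℕ, k < 2*d + 1 → (flipOrStay (W k) (W (k+1)) ↔ k = 2*d) := by
        intro k hk
        rcases lt_trichotomy k d with h | h | h
        · rw [Wv1 k (by omega), Wv1 (k+1) (by omega)]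
          unfold flipOrStay
          simp only [Prod.mk.injEq, Fin.mk.injEq, ne_eq]
          constructor
          · rintro (⟨-, h2⟩ | ⟨h1, -⟩)
            · omega
            · exact (h1 trivial).elim
          · intro hc; omega
        · rcases Nat.eq_zero_or_pos d with hd0 | hd0
          · have hk0 : k = 0 := by omega
            subst hk0
            constructor
            · intro _; omega
            · intro _
              rw [Wv1 0 (by omega), Wv3 1 (by omega)]
              unfold flipOrStay
              left
              exact Prod.ext rfl (Fin.ext (by simp))
          · rw [Wv1 k (le_of_eq h), Wv2 (k+1) (by omega) (by omega)]
            unfold flipOrStay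
            simp only [Prod.mk.injEq, Fin.mk.injEq, ne_eq]
            constructor
            · rintro (⟨h1, -⟩ | ⟨-, h2⟩)
              · exact absurd h1 (by simp)
              · omega
            · intro hc; omega
        · rcases lt_or_ge k (2*d) with h2 | h2
          · rw [Wv2 k (by omega) (by omega), Wv2 (k+1) (by omega) (by omega)]
            unfold flipOrStay
            simp only [Prod.mk.injEq, Fin.mk.injEq, ne_eq]
            constructor
            · rintro (⟨-, hh⟩ | ⟨hh, -⟩)
              · omega
              · exact (hh trivial).elim
            · intro hc; omega
          · have hieq : k = 2*d := by omega
            subst hieq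
            constructor
            · intro _; rfl
            · intro _
              rw [Wv2 (2*d) (by omega) (by omega), Wv3 (2*d+1) (by omega)]
              unfold flipOrStay
              right
              refine ⟨by simp, ?_⟩
              simp only [ne_eq, Fin.mk.injEq]
              omega
      have hstep : ∀ i : Fin (2*d + 1),
          flipOrStay (w i.castSucc) (w i.succ) ↔ (i : ℕ) = 2*d := by
        intro i
        rw [(hred i).1, (hred i).2]
        exact hstepN (i : ℕ) i.isLt
      have hfilter : Finset.univ.filter
          (fun i : Fin (2*d + 1) => flipOrStay (w i.castSucc) (w i.succ))
          = {(⟨2*d, by omega⟩ : Fin (2*d + 1))} := by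
        ext i
        simp only [Finset.mem_filter, Finset.mem_univ, true_and, Finset.mem_singleton]
        rw [hstep i]
        constructor
        · intro h; exact Fin.ext (by simpa using h)
        · intro h; rw [h]
      rw [hfilter, Finset.card_singleton]
  -- the product along w
  set θ : ℝ := 1/(n:ℝ) with hθ
  have hprod : (∏ i : Fin (2*d + 1), dhnP n m (w i.castSucc) (w i.succ))
      = θ * (1 - θ)^(2*d) *
        ((∏ i ∈ Finset.range d, rho m (jstar + i)) * (1 - rho m (jstar + d))) := by
    have hconv : (∏ i : Fin (2*d + 1), dhnP n m (w i.castSucc) (w i.succ))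
        = ∏ k ∈ Finset.range (2*d + 1), dhnP n m (W k) (W (k+1)) := by
      rw [← Fin.prod_univ_eq_prod_range (fun k => dhnP n m (W k) (W (k+1))) (2*d+1)]
      exact Finset.prod_congr rfl fun i _ => by rw [(hred i).1, (hred i).2]
    rw [hconv]
    rcases Nat.eq_zero_or_pos d with hd0 | hd0
    · subst hd0
      rw [show 2*0+1 = 1 from rfl, Finset.prod_range_one]
      have hW0 : W 0 = (true, ⟨jstar - 1, by omega⟩) := by
        rw [Wv1 0 (by omega)]
        exact Prod.ext rfl (Fin.ext (by simp))
      rw [hW0, Wv3 1 (by omega), dhnP_stay_up]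
      show θ * (1 - min 1 (m (jstar - 1 + 2) / m (jstar - 1 + 1))) = _
      rw [show jstar - 1 + 2 = jstar + 0 + 1 by omega,
        show jstar - 1 + 1 = jstar + 0 by omega]
      simp [rho]
    · -- d ≥ 1
      have hup' : ∀ k ∈ Finset.Ico 0 d, dhnP n m (W k) (W (k+1))
          = (1 - θ) * rho m (jstar + k) := by
        intro k hk
        simp only [Finset.mem_Ico] at hk
        rw [Wv1 k (by omega), Wv1 (k+1) (by omega),
          dhnP_shift_up n m _ _ (by show jstar - 1 + (k+1) = jstar - 1 + k + 1; omega)]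
        show (1 - θ) * min 1 (m (jstar - 1 + k + 2) / m (jstar - 1 + k + 1)) = _
        rw [show jstar - 1 + k + 2 = jstar + k + 1 by omega,
          show jstar - 1 + k + 1 = jstar + k by omega]
        rfl
      have hjump : dhnP n m (W d) (W (d+1)) = (1 - θ) * (1 - rho m (jstar + d)) := by
        have h2 : W (d+1) = (false, ⟨jstar - 1 + d, by omega⟩) := by
          rw [Wv2 (d+1) (by omega) (by omega)]
          exact Prod.ext rfl (Fin.ext (by show jstar + 2*d - (d+1) = jstar - 1 + d; omega))
        rw [Wv1 d le_rfl, h2, dhnP_jump_up]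
        show (1 - θ) * (1 - min 1 (m (jstar - 1 + d + 2) / m (jstar - 1 + d + 1))) = _
        rw [show jstar - 1 + d + 2 = jstar + d + 1 by omega,
          show jstar - 1 + d + 1 = jstar + d by omega]
        rfl
      have hdown' : ∀ k ∈ Finset.Ico (d+1) (2*d), dhnP n m (W k) (W (k+1)) = 1 - θ := by
        intro k hk
        simp only [Finset.mem_Ico] at hk
        rw [Wv2 k (by omega) (by omega), Wv2 (k+1) (by omega) (by omega),
          dhnP_shift_down n m _ _
            (by show jstar + 2*d - (k+1) + 1 = jstar + 2*d - k; omega)]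
        show (1 - θ) * min 1 (m (jstar + 2*d - k) / m (jstar + 2*d - k + 1)) = _
        rw [min_eq_left, mul_one]
        rw [one_le_div (hpos (jstar + 2*d - k + 1) (by omega) (by omega))]
        exact hdown (jstar + 2*d - k) (by omega) (by omega)
      have hflip : dhnP n m (W (2*d)) (W (2*d+1)) = θ := by
        rw [Wv2 (2*d) (by omega) (by omega), Wv3 (2*d+1) (by omega),
          dhnP_flip_down n m _ _ (by show jstar - 1 + 1 = jstar + 2*d - 2*d; omega)]
        show θ * min 1 (m (jstar + 2*d - 2*d) / m (jstar + 2*d - 2*d + 1)) = _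
        rw [show jstar + 2*d - 2*d = jstar by omega, min_eq_left, mul_one]
        rw [one_le_div (hpos (jstar + 1) (by omega) (by omega))]
        exact hdown jstar le_rfl (by omega)
      rw [Finset.prod_range_succ, hflip]
      rw [Finset.range_eq_Ico,
        ← Finset.prod_Ico_consecutive _ (Nat.zero_le d) (by omega : d ≤ 2*d)]
      rw [Finset.prod_eq_prod_Ico_succ_bot (by omega : d < 2*d), hjump]
      rw [Finset.prod_congr rfl hup', Finset.prod_congr rfl hdown']
      rw [Finset.prod_const, Nat.card_Ico, Finset.prod_mul_distrib, Finset.prod_const,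
        Nat.card_Ico]
      rw [← Finset.range_eq_Ico, Nat.sub_zero] at *
      have key : (1 - θ)^d * (1 - θ) * (1 - θ)^(2*d - (d+1)) = (1 - θ)^(2*d) := by
        rw [← pow_succ, ← pow_add]
        congr 1
        omega
      rw [← key]
      ring
  -- conclude
  calc (1/(n:ℝ)) * (1 - 1/(n:ℝ))^(2*d) *
        ((∏ i ∈ Finset.range d, rho m (jstar + i)) * (1 - rho m (jstar + d)))
      = (if w 0 = jt ∧ w (Fin.last (2*d + 1)) = jt ∧
          (∀ l : Fin (2*d + 2), 0 < (l : ℕ) → (l : ℕ) < 2*d + 1 → w l ≠ jt) ∧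
          (Finset.univ.filter
            (fun i : Fin (2*d + 1) => flipOrStay (w i.castSucc) (w i.succ))).card = 1
         then ∏ i : Fin (2*d + 1), dhnP n m (w i.castSucc) (w i.succ) else 0) := by
        rw [if_pos hC, hprod]
    _ ≤ exf n m jt (2*d) := by
        rw [show exf n m jt (2*d) = ∑ v : Fin (2*d + 2) → Bool × Fin n,
          (if v 0 = jt ∧ v (Fin.last (2*d + 1)) = jt ∧
              (∀ l : Fin (2*d + 2), 0 < (l : ℕ) → (l : ℕ) < 2*d + 1 → v l ≠ jt) ∧
              (Finset.univ.filter
                (fun i : Fin (2*d + 1) => flipOrStay (v i.castSucc) (v i.succ))).card = 1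
           then ∏ i : Fin (2*d + 1), dhnP n m (v i.castSucc) (v i.succ) else 0) from rfl]
        exact Finset.single_le_sum (f := fun v : Fin (2*d + 2) → Bool × Fin n =>
          (if v 0 = jt ∧ v (Fin.last (2*d + 1)) = jt ∧
              (∀ l : Fin (2*d + 2), 0 < (l : ℕ) → (l : ℕ) < 2*d + 1 → v l ≠ jt) ∧
              (Finset.univ.filter
                (fun i : Fin (2*d + 1) => flipOrStay (v i.castSucc) (v i.succ))).card = 1
           then ∏ i : Fin (2*d + 1), dhnP n m (v i.castSucc) (v i.succ) else 0))
          (fun v _ => by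
            split_ifs
            · exact prodnn n hn m hm0 hmtop hpos v
            · exact le_rfl) (Finset.mem_univ w)
end

section
variable (n : ℕ) (hn : 3 ≤ n) (m : ℕ → ℝ) (hm0 : m 0 = 0) (hmtop : m (n + 1) = 0)
  (hpos : ∀ j, 1 ≤ j → j ≤ n → 0 < m j)
  (jstar : ℕ) (hj1 : 1 ≤ jstar) (hj2 : jstar ≤ n)

lemma telescope (D : ℕ) :
    ∑ d ∈ Finset.range D,
      (∏ i ∈ Finset.range d, rho m (jstar + i)) * (1 - rho m (jstar + d))
    = 1 - ∏ i ∈ Finset.range D, rho m (jstar + i) := by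
  induction D with
  | zero => simp
  | succ D IH =>
    rw [Finset.sum_range_succ, IH, Finset.prod_range_succ]
    ring

include hm0 hmtop hpos in
lemma rho_nn (k : ℕ) (h1 : 1 ≤ k) (h2 : k ≤ n) : 0 ≤ rho m k :=
  le_min zero_le_one (div_nonneg (mnn n m hm0 hmtop hpos (k+1) (by omega))
    (hpos k h1 h2).le)

lemma rho_le1 (k : ℕ) : rho m k ≤ 1 := min_le_left _ _

include hmtop in
lemma rho_n : rho m n = 0 := by
  rw [rho, hmtop, zero_div]
  simp

include hn hm0 hmtop hpos hj1 hj2 in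
theorem final (hhalf : 2 * jstar ≤ n + 1)
    (hdown : ∀ j, jstar ≤ j → j < n → m (j + 1) ≤ m j) :
    (1 / n : ℝ) * ((n - 1 : ℝ) / n) ^ (4 * n - 2 * jstar - 2) ≤
      ∑' t : ℕ, exf n m (true, ⟨jstar - 1, lt_of_lt_of_le (Nat.sub_lt hj1 Nat.one_pos) hj2⟩) t := by
  set jt : Bool × Fin n := (true, ⟨jstar - 1, by omega⟩) with hjt
  have hn0 : (n:ℝ) ≠ 0 := by positivity
  have hθ0 : (0:ℝ) ≤ 1/n := by positivity
  have hθ1 : (1:ℝ)/n ≤ 1 := by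
    rw [div_le_one (by positivity)]; exact_mod_cast by omega
  have hbase0 : (0:ℝ) ≤ 1 - 1/(n:ℝ) := by linarith
  have hbase1 : 1 - 1/(n:ℝ) ≤ 1 := by linarith
  have hfrac : ((n:ℝ) - 1)/n = 1 - 1/(n:ℝ) := by field_simp
  rw [hfrac]
  set D : ℕ := n - jstar with hD
  have hπnn : ∀ d : ℕ, d ≤ D → 0 ≤ (∏ i ∈ Finset.range d, rho m (jstar + i)) *
      (1 - rho m (jstar + d)) := by
    intro d hdle
    apply mul_nonneg
    · exact Finset.prod_nonneg fun i hi => by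
        simp only [Finset.mem_range] at hi
        exact rho_nn n m hm0 hmtop hpos (jstar + i) (by omega) (by omega)
    · have := rho_le1 m (jstar + d)
      linarith
  calc (1/(n:ℝ)) * (1 - 1/(n:ℝ)) ^ (4 * n - 2 * jstar - 2)
      ≤ (1/(n:ℝ)) * (1 - 1/(n:ℝ)) ^ (2 * D) := by
        apply mul_le_mul_of_nonneg_left _ hθ0
        apply pow_le_pow_of_le_one hbase0 hbase1
        omega
    _ = (1/(n:ℝ)) * (1 - 1/(n:ℝ)) ^ (2 * D) *
          (∑ d ∈ Finset.range (D + 1),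
            (∏ i ∈ Finset.range d, rho m (jstar + i)) * (1 - rho m (jstar + d))) := by
        rw [telescope m jstar, Finset.prod_range_succ,
          show jstar + D = n by omega, rho_n n m hmtop, mul_zero, sub_zero, mul_one]
    _ = ∑ d ∈ Finset.range (D + 1), (1/(n:ℝ)) * (1 - 1/(n:ℝ)) ^ (2 * D) *
          ((∏ i ∈ Finset.range d, rho m (jstar + i)) * (1 - rho m (jstar + d))) := by
        rw [Finset.mul_sum]
    _ ≤ ∑ d ∈ Finset.range (D + 1), exf n m jt (2 * d) := by
        apply Finset.sum_le_sum
        intro d hd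
        simp only [Finset.mem_range] at hd
        have hdle : d ≤ D := by omega
        have step1 : (1/(n:ℝ)) * (1 - 1/(n:ℝ)) ^ (2 * D) *
            ((∏ i ∈ Finset.range d, rho m (jstar + i)) * (1 - rho m (jstar + d)))
            ≤ (1/(n:ℝ)) * (1 - 1/(n:ℝ)) ^ (2 * d) *
              ((∏ i ∈ Finset.range d, rho m (jstar + i)) * (1 - rho m (jstar + d))) := by
          apply mul_le_mul_of_nonneg_right _ (hπnn d hdle)
          apply mul_le_mul_of_nonneg_left _ hθ0
          apply pow_le_pow_of_le_one hbase0 hbase1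
          omega
        exact step1.trans (path_bound n hn m hm0 hmtop hpos jstar hj1 hj2 hdown d hdle)
    _ = ∑ t ∈ (Finset.range (D + 1)).image (fun d => 2 * d), exf n m jt t := by
        rw [Finset.sum_image (fun a _ b _ hab => by omega)]
    _ ≤ ∑' t : ℕ, exf n m jt t :=
        Summable.sum_le_tsum _ (fun t _ => exf_nonneg n hn m hm0 hmtop hpos jt t)
          (exf_summable n hn m hm0 hmtop hpos jt)
end

/-- assume moreover `j* ≤ (n+1)/2`.  Starting from the basepoint
`j̃ = (+1, j*)`, the probability that the first return time `T` to `j̃` is finite and that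
exactly one flip or stationary move occurs before time `T` is at least
`(1/n) · ((n-1)/n)^(4n - 2j* - 2)`.  The probability is written as the (countable) sum
over the return time `t + 1 ≥ 1` and over all excursions of that length with exactly one
flip-or-stationary step of the product of one-step transition probabilities. -/
theorem dhn_excursion_one_flip (n : ℕ) (hn : 3 ≤ n) (hodd : Odd n)
    (m : ℕ → ℝ) (hm0 : m 0 = 0) (hmtop : m (n + 1) = 0)
    (hpos : ∀ j, 1 ≤ j → j ≤ n → 0 < m j)
    (jstar : ℕ) (hj1 : 1 ≤ jstar) (hj2 : jstar ≤ n)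
    (hhalf : 2 * jstar ≤ n + 1)
    (hup : ∀ j, 1 ≤ j → j < jstar → m j ≤ m (j + 1))
    (hdown : ∀ j, jstar ≤ j → j < n → m (j + 1) ≤ m j)
    (jt : Bool × Fin n) (hjt : jt = (true, ⟨jstar - 1, by omega⟩)) :
    (1 / n : ℝ) * ((n - 1 : ℝ) / n) ^ (4 * n - 2 * jstar - 2) ≤
      ∑' t : ℕ,
        ∑ w : Fin (t + 2) → Bool × Fin n,
          (if w 0 = jt ∧ w (Fin.last (t + 1)) = jt ∧
              (∀ l : Fin (t + 2), 0 < (l : ℕ) → (l : ℕ) < t + 1 → w l ≠ jt) ∧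
              (Finset.univ.filter
                (fun i : Fin (t + 1) => flipOrStay (w i.castSucc) (w i.succ))).card = 1
           then ∏ i : Fin (t + 1), dhnP n m (w i.castSucc) (w i.succ) else 0) := by
  subst hjt
  have h := final n hn m hm0 hmtop hpos jstar hj1 hj2 hhalf hdown
  exact h
end

section
/- Minorization implies geometric convergence (finite-state form of Meyn–Tweedie Theorem 16.2.4): let S be a finite nonempty set, P a stochastic matrix on S, π a probability on S with πP = π, m ≥ 1 an integer, and ν : S → [0,∞) a nonnegative function such that P^m(x, s) ≥ ν(s) for all x, s ∈ S. Then for every x ∈ S and every integer k ≥ 0, (1/2)·Σ_{s∈S} |P^k(x,s) − π(s)| ≤ ρ^{⌊k/m⌋}, where ρ = 1 − Σ_{s∈S} ν(s). -/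
lemma pow_nonneg_entries {S : Type*} [Fintype S] [DecidableEq S]
    (P : Matrix S S ℝ) (hP : ∀ x s, 0 ≤ P x s) (n : ℕ) :
    ∀ x s, 0 ≤ (P ^ n) x s := by
  induction n with
  | zero =>
    intro x s
    simp [Matrix.one_apply]
    split <;> norm_num
  | succ n ih =>
    intro x s
    rw [pow_succ, Matrix.mul_apply]
    exact Finset.sum_nonneg fun y _ => mul_nonneg (ih x y) (hP y s)

lemma pow_row_sum {S : Type*} [Fintype S] [DecidableEq S]
    (P : Matrix S S ℝ) (hrow : ∀ x, ∑ s, P x s = 1) (n : ℕ) :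
    ∀ x, ∑ s, (P ^ n) x s = 1 := by
  induction n with
  | zero => intro x; simp [Matrix.one_apply]
  | succ n ih =>
    intro x
    simp only [pow_succ, Matrix.mul_apply]
    rw [Finset.sum_comm]
    have : ∀ y, ∑ s, (P ^ n) x y * P y s = (P ^ n) x y := by
      intro y; rw [← Finset.mul_sum, hrow y, mul_one]
    simp_rw [this]
    exact ih x

lemma pow_stationary {S : Type*} [Fintype S] [DecidableEq S]
    (P : Matrix S S ℝ) (π : S → ℝ) (hstat : ∀ s, ∑ x, π x * P x s = π s) (n : ℕ) :
    ∀ s, ∑ x, π x * (P ^ n) x s = π s := by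
  induction n with
  | zero => intro s; simp [Matrix.one_apply]
  | succ n ih =>
    intro s
    simp only [pow_succ, Matrix.mul_apply]
    calc ∑ x, π x * ∑ y, (P ^ n) x y * P y s
        = ∑ y, (∑ x, π x * (P ^ n) x y) * P y s := by
          simp_rw [Finset.mul_sum]
          rw [Finset.sum_comm]
          refine Finset.sum_congr rfl fun y _ => ?_
          rw [Finset.sum_mul]
          exact Finset.sum_congr rfl fun x _ => by ring
      _ = ∑ y, π y * P y s := by simp_rw [ih]
      _ = π s := hstat s

lemma contraction_lemma {S : Type*} [Fintype S]
    (Q : Matrix S S ℝ) (hQrow : ∀ x, ∑ s, Q x s = 1)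
    (ν : S → ℝ) (hmin : ∀ x s, ν s ≤ Q x s)
    (a : S → ℝ) (ha : ∑ y, a y = 0) :
    ∑ s, |∑ y, a y * Q y s| ≤ (1 - ∑ s, ν s) * ∑ y, |a y| := by
  calc ∑ s, |∑ y, a y * Q y s|
      = ∑ s, |∑ y, a y * (Q y s - ν s)| := by
        refine Finset.sum_congr rfl fun s _ => ?_
        congr 1
        simp_rw [mul_sub]
        rw [Finset.sum_sub_distrib, ← Finset.sum_mul, ha, zero_mul, sub_zero]
    _ ≤ ∑ s, ∑ y, |a y| * (Q y s - ν s) := by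
        refine Finset.sum_le_sum fun s _ => ?_
        calc |∑ y, a y * (Q y s - ν s)| ≤ ∑ y, |a y * (Q y s - ν s)| :=
              Finset.abs_sum_le_sum_abs _ _
          _ = ∑ y, |a y| * (Q y s - ν s) := by
              congr 1; ext y
              rw [abs_mul, abs_of_nonneg (sub_nonneg.2 (hmin y s))]
    _ = ∑ y, |a y| * (1 - ∑ s, ν s) := by
        rw [Finset.sum_comm]
        congr 1; ext y
        rw [← Finset.mul_sum, Finset.sum_sub_distrib, hQrow y]
    _ = (1 - ∑ s, ν s) * ∑ y, |a y| := by
        rw [← Finset.sum_mul, mul_comm]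

/-- finite-state Meyn–Tweedie minorization theorem: let `S` be a finite
nonempty set, `P` a stochastic matrix on `S`, `π` a stationary probability for `P`,
`m ≥ 1`, and `ν : S → [0,∞)` a minorizing function with `P^m(x,s) ≥ ν(s)` for all `x, s`.
Then for every `x` and `k ≥ 0`,
`(1/2)·Σ_s |P^k(x,s) − π(s)| ≤ ρ^{⌊k/m⌋}` where `ρ = 1 − Σ_s ν(s)`. -/
theorem minorization_geometric_convergence
    {S : Type*} [Fintype S] [DecidableEq S] [Nonempty S]
    (P : Matrix S S ℝ) (hP : ∀ x s, 0 ≤ P x s) (hrow : ∀ x, ∑ s, P x s = 1)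
    (π : S → ℝ) (hπ0 : ∀ s, 0 ≤ π s) (hπ1 : ∑ s, π s = 1)
    (hstat : ∀ s, ∑ x, π x * P x s = π s)
    (m : ℕ) (hm : 1 ≤ m)
    (ν : S → ℝ) (hν : ∀ s, 0 ≤ ν s)
    (hmin : ∀ x s, ν s ≤ (P ^ m) x s) :
    ∀ (x : S) (k : ℕ),
      (1 / 2) * ∑ s, |(P ^ k) x s - π s| ≤ (1 - ∑ s, ν s) ^ (k / m) := by
  intro x k
  set ρ := 1 - ∑ s, ν s with hρ
  obtain ⟨x₀⟩ := ‹Nonempty S›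
  have hρ0 : 0 ≤ ρ := by
    have : ∑ s, ν s ≤ ∑ s, (P ^ m) x₀ s := Finset.sum_le_sum fun s _ => hmin x₀ s
    rw [pow_row_sum P hrow m x₀] at this
    linarith
  -- key induction: rows of (P^m)^q
  have key : ∀ q : ℕ, ∑ s, |((P ^ m) ^ q) x s - π s| ≤ 2 * ρ ^ q := by
    intro q
    induction q with
    | zero =>
      simp only [pow_zero, Matrix.one_apply]
      calc ∑ s, |(if x = s then (1:ℝ) else 0) - π s|
          ≤ ∑ s, ((if x = s then (1:ℝ) else 0) + π s) := by
            refine Finset.sum_le_sum fun s _ => ?_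
            have h1 : (0:ℝ) ≤ if x = s then (1:ℝ) else 0 := by split <;> norm_num
            calc |(if x = s then (1:ℝ) else 0) - π s|
                ≤ |if x = s then (1:ℝ) else 0| + |π s| := abs_sub _ _
              _ = (if x = s then (1:ℝ) else 0) + π s := by
                  rw [abs_of_nonneg h1, abs_of_nonneg (hπ0 s)]
        _ = 2 := by rw [Finset.sum_add_distrib, hπ1]; norm_num
        _ = 2 * ρ ^ 0 := by norm_num
    | succ q ih =>
      have hsum0 : ∑ y, (((P ^ m) ^ q) x y - π y) = 0 := by
        rw [Finset.sum_sub_distrib, ← pow_mul, pow_row_sum P hrow (m * q) x, hπ1]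
        ring
      have hrew : ∀ s, ((P ^ m) ^ (q+1)) x s - π s
          = ∑ y, (((P ^ m) ^ q) x y - π y) * (P ^ m) y s := by
        intro s
        rw [pow_succ, Matrix.mul_apply]
        have hst := pow_stationary P π hstat m s
        rw [← hst, ← Finset.sum_sub_distrib]
        exact Finset.sum_congr rfl fun y _ => by ring
      calc ∑ s, |((P ^ m) ^ (q+1)) x s - π s|
          = ∑ s, |∑ y, (((P ^ m) ^ q) x y - π y) * (P ^ m) y s| := by
            congr 1; ext s; rw [hrew s]
        _ ≤ ρ * ∑ y, |((P ^ m) ^ q) x y - π y| :=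
            contraction_lemma (P ^ m) (pow_row_sum P hrow m) ν (hmin) _ hsum0
        _ ≤ ρ * (2 * ρ ^ q) := by
            exact mul_le_mul_of_nonneg_left ih hρ0
        _ = 2 * ρ ^ (q+1) := by ring
  -- decompose k = m*(k/m) + k%m
  set q := k / m with hq
  set r := k % m with hr
  have hk : k = m * q + r := (Nat.div_add_mod k m).symm
  have hdecomp : ∀ s, (P ^ k) x s - π s
      = ∑ y, (((P ^ m) ^ q) x y - π y) * (P ^ r) y s := by
    intro s
    have : (P ^ k) = (P ^ m) ^ q * P ^ r := by
      rw [hk, pow_add, pow_mul]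
    rw [this, Matrix.mul_apply]
    have hstr : π s = ∑ y, π y * (P ^ r) y s :=
      (pow_stationary P π hstat r s).symm
    rw [hstr]
    rw [← Finset.sum_sub_distrib]
    congr 1; ext y; ring
  have hsum0 : ∑ y, (((P ^ m) ^ q) x y - π y) = 0 := by
    rw [Finset.sum_sub_distrib, ← pow_mul, pow_row_sum P hrow (m * q) x, hπ1]
    ring
  have final : ∑ s, |(P ^ k) x s - π s| ≤ 2 * ρ ^ q := by
    calc ∑ s, |(P ^ k) x s - π s|
        = ∑ s, |∑ y, (((P ^ m) ^ q) x y - π y) * (P ^ r) y s| := by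
          congr 1; ext s; rw [hdecomp s]
      _ ≤ (1 - ∑ s, (0:ℝ)) * ∑ y, |((P ^ m) ^ q) x y - π y| := by
          refine contraction_lemma (P ^ r) (pow_row_sum P hrow r) (fun _ => 0)
            (fun x s => pow_nonneg_entries P hP r x s) _ hsum0
      _ = ∑ y, |((P ^ m) ^ q) x y - π y| := by simp
      _ ≤ 2 * ρ ^ q := key q
  linarith
end

section
/- For the Metropolis chain on {1,…,n} with uniform target distribution, the number of steps needed to converge to stationarity is of order n²: (i) for every δ > 0 there exists a constant b > 0 such that for all n ≥ 2, every starting state y, and every integer z ≥ bn², the variation distance satisfies ‖M^z(y,·) − U_n‖ < δ, where U_n is the uniform distribution on {1,…,n}; and (ii) there exist constants a > 0 and δ₀ > 0 such that for all sufficiently large n there is a starting state y with ‖M^z(y,·) − U_n‖ ≥ δ₀ for every integer z ≤ an². -/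
/-- Transition matrix of the Metropolis chain on `{1,…,n}` (encoded as `Fin n`) with
uniform target distribution: from an interior state it moves to each neighbour with
probability `1/2`; from an endpoint it moves to its unique neighbour with probability
`1/2` and stays put with probability `1/2`. -/
noncomputable def metroM (n : ℕ) : Matrix (Fin n) (Fin n) ℝ :=
  Matrix.of fun i j =>
    (if (j : ℕ) = (i : ℕ) + 1 then (1 : ℝ) / 2 else 0) +
    (if (j : ℕ) + 1 = (i : ℕ) then (1 : ℝ) / 2 else 0) +
    (if j = i ∧ ((i : ℕ) = 0 ∨ (i : ℕ) = n - 1) then (1 : ℝ) / 2 else 0)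

open Real Finset

namespace MetroAux


/-- eigenfunction values -/
noncomputable def ef (n k j : ℕ) : ℝ := Real.cos (k * π * (2 * j + 1) / (2 * n))
/-- eigenvalues -/
noncomputable def ev (n k : ℕ) : ℝ := Real.cos (k * π / n)

lemma abs_ef_le_one (n k j : ℕ) : |ef n k j| ≤ 1 := Real.abs_cos_le_one _

lemma cos_sum_tel (θ : ℝ) (m : ℕ) :
    (∑ k ∈ range m, Real.cos (k * θ)) * (2 * Real.sin (θ / 2)) =
      Real.sin (m * θ - θ / 2) + Real.sin (θ / 2) := by
  induction m with
  | zero => simp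
  | succ m ih =>
    have hterm : Real.cos (m * θ) * (2 * Real.sin (θ / 2)) =
        Real.sin (m * θ + θ / 2) - Real.sin (m * θ - θ / 2) := by
      rw [Real.sin_add, Real.sin_sub]; ring
    have harg : ((m + 1 : ℕ) : ℝ) * θ - θ / 2 = m * θ + θ / 2 := by push_cast; ring
    rw [sum_range_succ, add_mul, ih, hterm, harg]; ring

lemma sum_cos_eval (n m : ℕ) (hn : 0 < n) (hm : 0 < m) (hm2 : m < 2 * n) :
    ∑ k ∈ range n, Real.cos (k * ((m : ℝ) * π / n)) = if m % 2 = 1 then 1 else 0 := by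
  have hnR : (0:ℝ) < n := by exact_mod_cast hn
  have hhalf : (m : ℝ) * π / n / 2 = m * π / (2 * n) := by ring
  have hs : 0 < Real.sin ((m : ℝ) * π / n / 2) := by
    rw [hhalf]
    apply Real.sin_pos_of_pos_of_lt_pi
    · have : (0:ℝ) < m := by exact_mod_cast hm
      positivity
    · rw [div_lt_iff₀ (by positivity)]
      have : (m : ℝ) < 2 * n := by exact_mod_cast hm2
      nlinarith [Real.pi_pos]
  have htel := cos_sum_tel ((m : ℝ) * π / n) n
  have harg : (n : ℝ) * ((m : ℝ) * π / n) - (m : ℝ) * π / n / 2 =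
      (m : ℝ) * π - (m : ℝ) * π / n / 2 := by field_simp
  rw [harg] at htel
  have hsub := Real.sin_nat_mul_pi_sub ((m : ℝ) * π / n / 2) m
  rw [hsub] at htel
  have hkey : (∑ k ∈ range n, Real.cos (k * ((m : ℝ) * π / n))) =
      (1 - (-1) ^ m) / 2 := by
    have h2 : (2 : ℝ) * Real.sin ((m : ℝ) * π / n / 2) ≠ 0 := by positivity
    apply mul_right_cancel₀ h2
    rw [htel]; ring
  rw [hkey]
  rcases Nat.even_or_odd m with he | ho
  · rw [he.neg_one_pow]
    have : m % 2 = 0 := Nat.even_iff.mp he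
    simp [this]
  · rw [ho.neg_one_pow]
    have : m % 2 = 1 := Nat.odd_iff.mp ho
    simp [this]



lemma trig_base (a : ℝ) : Real.cos (2 * a + a) / 2 + Real.cos a / 2 =
    Real.cos (2 * a) * Real.cos a := by
  rw [Real.cos_add, Real.cos_two_mul, Real.sin_two_mul]
  linear_combination (-(Real.cos a)) * Real.sin_sq_add_cos_sq a

lemma eigen_nat (n : ℕ) (hn : 2 ≤ n) (k i : ℕ) (hi : i < n) :
    ∑ j ∈ range n, ((if j = i + 1 then (1 : ℝ) / 2 else 0) +
        (if j + 1 = i then (1 : ℝ) / 2 else 0) +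
        (if j = i ∧ (i = 0 ∨ i = n - 1) then (1 : ℝ) / 2 else 0)) * ef n k j =
      ev n k * ef n k i := by
  have hnR : (0:ℝ) < (n:ℝ) := by positivity
  have hnne : (n:ℝ) ≠ 0 := ne_of_gt hnR
  rcases eq_or_ne i 0 with rfl | hi0
  · -- left endpoint
    have hsum : ∑ j ∈ range n, ((if j = 0 + 1 then (1 : ℝ) / 2 else 0) +
        (if j + 1 = 0 then (1 : ℝ) / 2 else 0) +
        (if j = 0 ∧ (0 = 0 ∨ 0 = n - 1) then (1 : ℝ) / 2 else 0)) * ef n k j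
        = ef n k 1 / 2 + ef n k 0 / 2 := by
      have h : ∀ j ∈ range n, ((if j = 0 + 1 then (1 : ℝ) / 2 else 0) +
          (if j + 1 = 0 then (1 : ℝ) / 2 else 0) +
          (if j = 0 ∧ (0 = 0 ∨ 0 = n - 1) then (1 : ℝ) / 2 else 0)) * ef n k j
          = (if j = 1 then ef n k 1 / 2 else 0) + (if j = 0 then ef n k 0 / 2 else 0) := by
        intro j _
        rcases eq_or_ne j 1 with rfl | h1
        · have hn1 : (0:ℕ) ≠ n - 1 ∨ True := Or.inr trivial
          have : ¬ (0 = n - 1) := by omega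
          simp [this]; ring
        · rcases eq_or_ne j 0 with rfl | h0
          · simp; ring
          · simp [h1, h0, Nat.succ_ne_zero]
      rw [Finset.sum_congr rfl h, Finset.sum_add_distrib]
      rw [Finset.sum_ite_eq' (range n) 1 (fun _ => ef n k 1 / 2),
          Finset.sum_ite_eq' (range n) 0 (fun _ => ef n k 0 / 2)]
      have h1 : (1:ℕ) ∈ range n := by simp; omega
      have h0 : (0:ℕ) ∈ range n := by simp; omega
      simp [h1, h0]
    rw [hsum]
    unfold ef ev
    have e1 : (k:ℝ) * π * (2 * (1:ℕ) + 1) / (2 * n) =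
        2 * ((k:ℝ) * π / (2 * n)) + (k:ℝ) * π / (2 * n) := by push_cast; field_simp
    have e0 : (k:ℝ) * π * (2 * (0:ℕ) + 1) / (2 * n) = (k:ℝ) * π / (2 * n) := by
      push_cast; field_simp; ring
    have e2 : (k:ℝ) * π / n = 2 * ((k:ℝ) * π / (2 * n)) := by field_simp
    rw [e1, e0, e2]
    exact trig_base _
  · rcases eq_or_ne i (n - 1) with rfl | hin
    · -- right endpoint
      have hsum : ∑ j ∈ range n, ((if j = (n - 1) + 1 then (1 : ℝ) / 2 else 0) +
          (if j + 1 = n - 1 then (1 : ℝ) / 2 else 0) +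
          (if j = n - 1 ∧ (n - 1 = 0 ∨ n - 1 = n - 1) then (1 : ℝ) / 2 else 0)) * ef n k j
          = ef n k (n - 2) / 2 + ef n k (n - 1) / 2 := by
        have h : ∀ j ∈ range n, ((if j = (n - 1) + 1 then (1 : ℝ) / 2 else 0) +
            (if j + 1 = n - 1 then (1 : ℝ) / 2 else 0) +
            (if j = n - 1 ∧ (n - 1 = 0 ∨ n - 1 = n - 1) then (1 : ℝ) / 2 else 0)) * ef n k j
            = (if j = n - 2 then ef n k (n - 2) / 2 else 0) +
              (if j = n - 1 then ef n k (n - 1) / 2 else 0) := by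
          intro j hj
          rw [Finset.mem_range] at hj
          have hj1 : j ≠ (n - 1) + 1 := by omega
          have hc2 : (j + 1 = n - 1) ↔ (j = n - 2) := by omega
          rcases eq_or_ne j (n - 2) with rfl | h2
          · have : ¬ (n - 2 = n - 1) := by omega
            simp [hj1, hc2, this]; ring
          · rcases eq_or_ne j (n - 1) with rfl | h1
            · have : ¬ (n - 1 + 1 = n - 1) := by omega
              simp [hj1, hc2, h2, this]; ring
            · simp [hj1, hc2, h2, h1]
        rw [Finset.sum_congr rfl h, Finset.sum_add_distrib]
        rw [Finset.sum_ite_eq' (range n) (n - 2) (fun _ => ef n k (n - 2) / 2),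
            Finset.sum_ite_eq' (range n) (n - 1) (fun _ => ef n k (n - 1) / 2)]
        have h1 : (n - 2 : ℕ) ∈ range n := by simp; omega
        have h0 : (n - 1 : ℕ) ∈ range n := by simp; omega
        simp [h1, h0]
      rw [hsum]
      unfold ef ev
      have c2 : ((n - 2 : ℕ) : ℝ) = (n : ℝ) - 2 := by
        have : (2:ℕ) ≤ n := hn
        push_cast [Nat.cast_sub this]; ring
      have c1 : ((n - 1 : ℕ) : ℝ) = (n : ℝ) - 1 := by
        have : (1:ℕ) ≤ n := by omega
        push_cast [Nat.cast_sub this]; ring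
      have e1 : (k:ℝ) * π * (2 * ((n - 2 : ℕ) : ℝ) + 1) / (2 * n) =
          (k:ℝ) * π - (2 * ((k:ℝ) * π / (2 * n)) + (k:ℝ) * π / (2 * n)) := by
        rw [c2]; field_simp; ring
      have e0 : (k:ℝ) * π * (2 * ((n - 1 : ℕ) : ℝ) + 1) / (2 * n) =
          (k:ℝ) * π - (k:ℝ) * π / (2 * n) := by
        rw [c1]; field_simp; ring
      have e2 : (k:ℝ) * π / n = 2 * ((k:ℝ) * π / (2 * n)) := by field_simp
      rw [e1, e0, e2]
      set a := (k:ℝ) * π / (2 * n) with ha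
      rw [Real.cos_sub, Real.cos_sub, Real.sin_nat_mul_pi, Real.cos_add,
        Real.cos_two_mul, Real.sin_two_mul]
      linear_combination (-(Real.cos ((k:ℝ) * π) * Real.cos a)) * Real.sin_sq_add_cos_sq a
    · -- interior
      have hi1 : 1 ≤ i := by omega
      have hilt : i + 1 < n := by omega
      have hsum : ∑ j ∈ range n, ((if j = i + 1 then (1 : ℝ) / 2 else 0) +
          (if j + 1 = i then (1 : ℝ) / 2 else 0) +
          (if j = i ∧ (i = 0 ∨ i = n - 1) then (1 : ℝ) / 2 else 0)) * ef n k j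
          = ef n k (i + 1) / 2 + ef n k (i - 1) / 2 := by
        have h : ∀ j ∈ range n, ((if j = i + 1 then (1 : ℝ) / 2 else 0) +
            (if j + 1 = i then (1 : ℝ) / 2 else 0) +
            (if j = i ∧ (i = 0 ∨ i = n - 1) then (1 : ℝ) / 2 else 0)) * ef n k j
            = (if j = i + 1 then ef n k (i + 1) / 2 else 0) +
              (if j = i - 1 then ef n k (i - 1) / 2 else 0) := by
          intro j hj
          have hino : ¬ (i = 0 ∨ i = n - 1) := by omega
          have hc2 : (j + 1 = i) ↔ (j = i - 1) := by omega
          rcases eq_or_ne j (i + 1) with rfl | h2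
          · have : ¬ (i + 1 = i - 1) := by omega
            simp [hc2, this, hino]; ring
          · rcases eq_or_ne j (i - 1) with rfl | h1
            · have : ¬ (i - 1 = i + 1) := by omega
              simp [hc2, this, h2, hino]; ring
            · simp [hc2, h2, h1, hino]
        rw [Finset.sum_congr rfl h, Finset.sum_add_distrib]
        rw [Finset.sum_ite_eq' (range n) (i + 1) (fun _ => ef n k (i + 1) / 2),
            Finset.sum_ite_eq' (range n) (i - 1) (fun _ => ef n k (i - 1) / 2)]
        have h1 : (i + 1 : ℕ) ∈ range n := by simp; omega
        have h0 : (i - 1 : ℕ) ∈ range n := by simp; omega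
        simp [h1, h0]
      rw [hsum]
      unfold ef ev
      have c1 : ((i - 1 : ℕ) : ℝ) = (i : ℝ) - 1 := by
        push_cast [Nat.cast_sub hi1]; ring
      have e1 : (k:ℝ) * π * (2 * ((i + 1 : ℕ) : ℝ) + 1) / (2 * n) =
          (k:ℝ) * π * (2 * (i : ℝ) + 1) / (2 * n) + (k:ℝ) * π / n := by
        push_cast; field_simp; ring
      have e0 : (k:ℝ) * π * (2 * ((i - 1 : ℕ) : ℝ) + 1) / (2 * n) =
          (k:ℝ) * π * (2 * (i : ℝ) + 1) / (2 * n) - (k:ℝ) * π / n := by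
        rw [c1]; field_simp; ring
      rw [e1, e0, Real.cos_add, Real.cos_sub]
      ring



lemma orth_aux (n : ℕ) (hn : 2 ≤ n) (i s : ℕ) (hi : i < n) (hs : s < n) (hle : s ≤ i) :
    (1 : ℝ) / n + (2 / n) * ∑ k ∈ Ico 1 n, ef n k i * ef n k s =
      if i = s then 1 else 0 := by
  have hnR : (0:ℝ) < (n:ℝ) := by positivity
  have hnne : (n:ℝ) ≠ 0 := ne_of_gt hnR
  set d := i - s with hd
  set m2 := i + s + 1 with hm2
  have hdC : ((d : ℕ) : ℝ) = (i : ℝ) - (s : ℝ) := by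
    rw [hd, Nat.cast_sub hle]
  have key : ∀ k : ℕ, ef n k i * ef n k s =
      (Real.cos ((k:ℝ) * ((d : ℝ) * π / n)) + Real.cos ((k:ℝ) * ((m2 : ℝ) * π / n))) / 2 := by
    intro k
    have hcc := Real.cos_add_cos ((k:ℝ) * ((d : ℝ) * π / n)) ((k:ℝ) * ((m2 : ℝ) * π / n))
    have hA : ((k:ℝ) * ((d : ℝ) * π / n) + (k:ℝ) * ((m2 : ℝ) * π / n)) / 2 =
        (k:ℝ) * π * (2 * (i : ℝ) + 1) / (2 * n) := by
      rw [hdC]; push_cast [hm2]; field_simp; ring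
    have hB : ((k:ℝ) * ((d : ℝ) * π / n) - (k:ℝ) * ((m2 : ℝ) * π / n)) / 2 =
        -((k:ℝ) * π * (2 * (s : ℝ) + 1) / (2 * n)) := by
      rw [hdC]; push_cast [hm2]; field_simp; ring
    rw [hA, hB, Real.cos_neg] at hcc
    unfold ef
    rw [hcc]; ring
  have hsplit : ∑ k ∈ Ico 1 n, ef n k i * ef n k s =
      ((∑ k ∈ Ico 1 n, Real.cos ((k:ℝ) * ((d : ℝ) * π / n))) +
       (∑ k ∈ Ico 1 n, Real.cos ((k:ℝ) * ((m2 : ℝ) * π / n)))) / 2 := by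
    rw [Finset.sum_congr rfl (fun k _ => key k), ← Finset.sum_add_distrib, ← Finset.sum_div]
  -- range-sum versions
  have hrange1 : ∀ c : ℝ, ∑ k ∈ range n, Real.cos ((k:ℝ) * c) =
      1 + ∑ k ∈ Ico 1 n, Real.cos ((k:ℝ) * c) := by
    intro c
    rw [Finset.sum_range_eq_add_Ico _ (by omega : 0 < n)]
    norm_num
  have hm2pos : 0 < m2 := by omega
  have hm2lt : m2 < 2 * n := by omega
  have hsum2 : ∑ k ∈ range n, Real.cos ((k:ℝ) * ((m2 : ℝ) * π / n)) =
      if m2 % 2 = 1 then 1 else 0 := sum_cos_eval n m2 (by omega) hm2pos hm2lt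
  rcases eq_or_ne i s with rfl | hne
  · -- diagonal : d = 0, m2 odd
    have hd0 : d = 0 := by omega
    have hm2odd : m2 % 2 = 1 := by omega
    have hsum1 : ∑ k ∈ Ico 1 n, Real.cos ((k:ℝ) * ((d : ℝ) * π / n)) = (n : ℝ) - 1 := by
      rw [hd0]
      have : ∀ k ∈ Ico 1 n, Real.cos ((k:ℝ) * (((0:ℕ) : ℝ) * π / n)) = 1 := by
        intro k _; norm_num
      rw [Finset.sum_congr rfl this, Finset.sum_const, Nat.card_Ico]
      rw [nsmul_eq_mul, mul_one]
      push_cast [Nat.cast_sub (by omega : 1 ≤ n)]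
      ring
    have hsum2' : ∑ k ∈ Ico 1 n, Real.cos ((k:ℝ) * ((m2 : ℝ) * π / n)) = 0 := by
      have := hrange1 ((m2 : ℝ) * π / n)
      rw [hsum2, hm2odd] at this
      simp at this
      linarith [this]
    rw [hsplit, hsum1, hsum2']
    simp
    field_simp; ring
  · -- off-diagonal
    have hdpos : 0 < d := by omega
    have hdlt : d < 2 * n := by omega
    have hsum1r : ∑ k ∈ range n, Real.cos ((k:ℝ) * ((d : ℝ) * π / n)) =
        if d % 2 = 1 then 1 else 0 := sum_cos_eval n d (by omega) hdpos hdlt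
    have hpar : (if d % 2 = 1 then (1:ℝ) else 0) + (if m2 % 2 = 1 then (1:ℝ) else 0) = 1 := by
      have hdm : d + m2 = 2 * i + 1 := by omega
      rcases Nat.even_or_odd d with he | ho
      · have h1 : d % 2 = 0 := Nat.even_iff.mp he
        have h2 : m2 % 2 = 1 := by omega
        simp [h1, h2]
      · have h1 : d % 2 = 1 := Nat.odd_iff.mp ho
        have h2 : m2 % 2 = 0 := by omega
        simp [h1, h2]
    have hs1 : ∑ k ∈ Ico 1 n, Real.cos ((k:ℝ) * ((d : ℝ) * π / n)) =
        (if d % 2 = 1 then (1:ℝ) else 0) - 1 := by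
      have := hrange1 ((d : ℝ) * π / n)
      rw [hsum1r] at this
      linarith [this]
    have hs2 : ∑ k ∈ Ico 1 n, Real.cos ((k:ℝ) * ((m2 : ℝ) * π / n)) =
        (if m2 % 2 = 1 then (1:ℝ) else 0) - 1 := by
      have := hrange1 ((m2 : ℝ) * π / n)
      rw [hsum2] at this
      linarith [this]
    rw [hsplit, hs1, hs2, if_neg hne]
    have : (if d % 2 = 1 then (1:ℝ) else 0) - 1 + ((if m2 % 2 = 1 then (1:ℝ) else 0) - 1) = -1 := by
      linarith [hpar]
    rw [this]
    field_simp; ring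

lemma orth (n : ℕ) (hn : 2 ≤ n) (i s : ℕ) (hi : i < n) (hs : s < n) :
    (1 : ℝ) / n + (2 / n) * ∑ k ∈ Ico 1 n, ef n k i * ef n k s =
      if i = s then 1 else 0 := by
  rcases le_total s i with h | h
  · exact orth_aux n hn i s hi hs h
  · have h2 := orth_aux n hn s i hs hi h
    rw [show (∑ k ∈ Ico 1 n, ef n k i * ef n k s) = ∑ k ∈ Ico 1 n, ef n k s * ef n k i from
      Finset.sum_congr rfl fun k _ => mul_comm _ _]
    rw [h2]
    simp [eq_comm]


lemma eigen (n : ℕ) (hn : 2 ≤ n) (k : ℕ) (y : Fin n) :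
    ∑ s : Fin n, metroM n y s * ef n k (s : ℕ) = ev n k * ef n k (y : ℕ) := by
  have h : ∀ s : Fin n, metroM n y s * ef n k (s : ℕ) =
      (fun j : ℕ => ((if j = (y : ℕ) + 1 then (1 : ℝ) / 2 else 0) +
        (if j + 1 = (y : ℕ) then (1 : ℝ) / 2 else 0) +
        (if j = (y : ℕ) ∧ ((y : ℕ) = 0 ∨ (y : ℕ) = n - 1) then (1 : ℝ) / 2 else 0)) * ef n k j)
        (s : ℕ) := by
    intro s
    simp only [metroM, Matrix.of_apply, Fin.ext_iff]
  have hsr := Fin.sum_univ_eq_sum_range (fun j : ℕ =>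
    ((if j = (y : ℕ) + 1 then (1 : ℝ) / 2 else 0) +
      (if j + 1 = (y : ℕ) then (1 : ℝ) / 2 else 0) +
      (if j = (y : ℕ) ∧ ((y : ℕ) = 0 ∨ (y : ℕ) = n - 1) then (1 : ℝ) / 2 else 0)) * ef n k j) n
  rw [Finset.sum_congr rfl (fun s _ => h s), hsr]
  exact eigen_nat n hn k y y.isLt

/-- spectral form of the z-step matrix -/
noncomputable def Amat (n z : ℕ) : Matrix (Fin n) (Fin n) ℝ :=
  Matrix.of fun y s => 1 / (n : ℝ) +
    (2 / n) * ∑ k ∈ Ico 1 n, (ev n k) ^ z * (ef n k (y : ℕ) * ef n k (s : ℕ))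

lemma ef_zero (n j : ℕ) : ef n 0 j = 1 := by
  unfold ef; norm_num

lemma row_sum (n : ℕ) (hn : 2 ≤ n) (y : Fin n) : ∑ s : Fin n, metroM n y s = 1 := by
  have h := eigen n hn 0 y
  simp only [ef_zero, mul_one] at h
  rw [h]
  unfold ev
  norm_num

lemma main (n : ℕ) (hn : 2 ≤ n) (z : ℕ) : (metroM n) ^ z = Amat n z := by
  induction z with
  | zero =>
    ext y s
    rw [pow_zero, Matrix.one_apply]
    have := orth n hn (y : ℕ) (s : ℕ) y.isLt s.isLt
    simp only [Amat, Matrix.of_apply, pow_zero, one_mul]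
    rw [this]
    simp [Fin.ext_iff]
  | succ z ih =>
    rw [pow_succ', ih]
    ext y s
    rw [Matrix.mul_apply]
    simp only [Amat, Matrix.of_apply]
    have expand : ∀ t : Fin n, metroM n y t * (1 / (n : ℝ) +
        (2 / n) * ∑ k ∈ Ico 1 n, (ev n k) ^ z * (ef n k (t : ℕ) * ef n k (s : ℕ)))
        = metroM n y t * (1 / (n : ℝ)) +
          ∑ k ∈ Ico 1 n, (2 / n * ((ev n k) ^ z * ef n k (s : ℕ))) *
            (metroM n y t * ef n k (t : ℕ)) := by
      intro t
      rw [mul_add, Finset.mul_sum, Finset.mul_sum]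
      congr 1
      exact Finset.sum_congr rfl fun k _ => by ring
    rw [Finset.sum_congr rfl fun t _ => expand t, Finset.sum_add_distrib]
    rw [Finset.sum_comm]
    have h1 : ∑ t : Fin n, metroM n y t * (1 / (n : ℝ)) = 1 / n := by
      rw [← Finset.sum_mul, row_sum n hn y, one_mul]
    rw [h1]
    congr 1
    rw [Finset.mul_sum]
    refine Finset.sum_congr rfl fun k _ => ?_
    rw [← Finset.mul_sum, eigen n hn k y]
    ring



lemma ev_abs_le (n k : ℕ) (hn : 2 ≤ n) (hk1 : 1 ≤ k) (hkn : k < n) :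
    |ev n k| ≤ 1 - 2 * ((min k (n - k) : ℕ) : ℝ) ^ 2 / (n : ℝ) ^ 2 := by
  have hnR : (0:ℝ) < (n:ℝ) := by positivity
  have hπ := Real.pi_pos
  rcases le_or_gt (2 * k) n with hhalf | hhalf
  · -- r = k
    have hrmin : min k (n - k) = k := by omega
    rw [hrmin]
    have hx0 : (0:ℝ) ≤ (k:ℝ) * π / n := by positivity
    have hxle : (k:ℝ) * π / n ≤ π / 2 := by
      rw [div_le_div_iff₀ hnR (by norm_num : (0:ℝ) < 2)]
      have : (2:ℝ) * k ≤ n := by exact_mod_cast hhalf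
      nlinarith
    have hnonneg : 0 ≤ ev n k := Real.cos_nonneg_of_mem_Icc ⟨by linarith, hxle⟩
    rw [abs_of_nonneg hnonneg]
    have hub := Real.cos_le_one_sub_mul_cos_sq (x := (k:ℝ) * π / n)
      (by rw [abs_of_nonneg hx0]; linarith)
    calc ev n k ≤ 1 - 2 / π ^ 2 * ((k:ℝ) * π / n) ^ 2 := hub
      _ = 1 - 2 * (k:ℝ) ^ 2 / (n:ℝ) ^ 2 := by field_simp
  · -- r = n - k
    have hrmin : min k (n - k) = n - k := by omega
    rw [hrmin]
    set r : ℕ := n - k with hr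
    have hcast : ((r : ℕ) : ℝ) = (n : ℝ) - k := by
      rw [hr, Nat.cast_sub (le_of_lt hkn)]
    have hflip : ev n k = -Real.cos ((r:ℝ) * π / n) := by
      unfold ev
      rw [← Real.cos_pi_sub]
      congr 1
      rw [hcast]
      field_simp
      ring
    have hx0 : (0:ℝ) ≤ (r:ℝ) * π / n := by positivity
    have hxle : (r:ℝ) * π / n ≤ π / 2 := by
      rw [div_le_div_iff₀ hnR (by norm_num : (0:ℝ) < 2)]
      have h2 : (2:ℝ) * r ≤ n := by
        have : 2 * r ≤ n := by omega
        exact_mod_cast this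
      nlinarith
    have hnonneg : 0 ≤ Real.cos ((r:ℝ) * π / n) :=
      Real.cos_nonneg_of_mem_Icc ⟨by linarith, hxle⟩
    rw [hflip, abs_neg, abs_of_nonneg hnonneg]
    have hub := Real.cos_le_one_sub_mul_cos_sq (x := (r:ℝ) * π / n)
      (by rw [abs_of_nonneg hx0]; linarith)
    calc Real.cos ((r:ℝ) * π / n) ≤ 1 - 2 / π ^ 2 * ((r:ℝ) * π / n) ^ 2 := hub
      _ = 1 - 2 * (r:ℝ) ^ 2 / (n:ℝ) ^ 2 := by field_simp

lemma ev_pow_le (n k z : ℕ) (hn : 2 ≤ n) (hk1 : 1 ≤ k) (hkn : k < n) {b : ℝ}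
    (hb : 0 < b) (hz : b * (n : ℝ) ^ 2 ≤ (z : ℝ)) :
    |ev n k| ^ z ≤ Real.exp (-2 * b) ^ k + Real.exp (-2 * b) ^ (n - k) := by
  have hnR : (0:ℝ) < (n:ℝ) := by positivity
  set r : ℕ := min k (n - k) with hrdef
  have hr1 : 1 ≤ r := by omega
  have habs := ev_abs_le n k hn hk1 hkn
  have hstep1 : |ev n k| ≤ Real.exp (-(2 * (r:ℝ) ^ 2 / (n:ℝ) ^ 2)) := by
    refine habs.trans ?_
    have := Real.add_one_le_exp (-(2 * (r:ℝ) ^ 2 / (n:ℝ) ^ 2))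
    linarith
  have hpow : |ev n k| ^ z ≤ Real.exp (-(2 * (r:ℝ) ^ 2 / (n:ℝ) ^ 2)) ^ z :=
    pow_le_pow_left₀ (abs_nonneg _) hstep1 z
  have hexp : Real.exp (-(2 * (r:ℝ) ^ 2 / (n:ℝ) ^ 2)) ^ z =
      Real.exp ((z:ℝ) * (-(2 * (r:ℝ) ^ 2 / (n:ℝ) ^ 2))) := by
    rw [← Real.exp_nat_mul]
  have hrRpos : (0:ℝ) < (r:ℝ) := by exact_mod_cast hr1
  have hmono : Real.exp ((z:ℝ) * (-(2 * (r:ℝ) ^ 2 / (n:ℝ) ^ 2))) ≤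
      Real.exp (-(2 * b * (r:ℝ) ^ 2)) := by
    apply Real.exp_le_exp.mpr
    have hzb : b ≤ (z:ℝ) / (n:ℝ) ^ 2 := by
      rw [le_div_iff₀ (by positivity)]; linarith
    have hmul : 2 * (r:ℝ) ^ 2 * b ≤ 2 * (r:ℝ) ^ 2 * ((z:ℝ) / (n:ℝ) ^ 2) :=
      mul_le_mul_of_nonneg_left hzb (by positivity)
    have heq : (z:ℝ) * (-(2 * (r:ℝ) ^ 2 / (n:ℝ) ^ 2)) =
        -(2 * (r:ℝ) ^ 2 * ((z:ℝ) / (n:ℝ) ^ 2)) := by ring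
    rw [heq]; linarith
  have hmono2 : Real.exp (-(2 * b * (r:ℝ) ^ 2)) ≤ Real.exp ((r:ℝ) * (-2 * b)) := by
    apply Real.exp_le_exp.mpr
    have hr1R : (1:ℝ) ≤ (r:ℝ) := by exact_mod_cast hr1
    have hrr : (r:ℝ) ≤ (r:ℝ) ^ 2 := by nlinarith
    nlinarith
  have hq : Real.exp ((r:ℝ) * (-2 * b)) = Real.exp (-2 * b) ^ r := by
    rw [← Real.exp_nat_mul]
  have hfinal : |ev n k| ^ z ≤ Real.exp (-2 * b) ^ r := by
    rw [← hq]
    exact hpow.trans (hexp ▸ (hmono.trans hmono2))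
  have hqpos : (0:ℝ) ≤ Real.exp (-2 * b) := le_of_lt (Real.exp_pos _)
  rcases le_total k (n - k) with hmin | hmin
  · have : r = k := by omega
    rw [this] at hfinal
    have : (0:ℝ) ≤ Real.exp (-2 * b) ^ (n - k) := by positivity
    linarith
  · have : r = n - k := by omega
    rw [this] at hfinal
    have : (0:ℝ) ≤ Real.exp (-2 * b) ^ k := by positivity
    linarith



lemma dist_le (n : ℕ) (hn : 2 ≤ n) (y : Fin n) (z : ℕ) :
    (1 / 2) * ∑ s : Fin n, |((metroM n) ^ z) y s - 1 / (n : ℝ)| ≤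
      ∑ k ∈ Ico 1 n, |ev n k| ^ z := by
  have hnR : (0:ℝ) < (n:ℝ) := by positivity
  rw [main n hn z]
  have hterm : ∀ s : Fin n, |Amat n z y s - 1 / (n : ℝ)| ≤
      (2 / n) * ∑ k ∈ Ico 1 n, |ev n k| ^ z := by
    intro s
    have h1 : Amat n z y s - 1 / (n:ℝ) =
        (2 / n) * ∑ k ∈ Ico 1 n, (ev n k) ^ z * (ef n k (y : ℕ) * ef n k (s : ℕ)) := by
      simp [Amat]
    rw [h1, abs_mul, abs_of_nonneg (by positivity : (0:ℝ) ≤ 2 / (n:ℝ))]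
    apply mul_le_mul_of_nonneg_left _ (by positivity)
    refine (Finset.abs_sum_le_sum_abs _ _).trans ?_
    apply Finset.sum_le_sum
    intro k _
    rw [abs_mul, abs_mul, abs_pow]
    have h2 := abs_ef_le_one n k (y : ℕ)
    have h3 := abs_ef_le_one n k (s : ℕ)
    have h4 : (0:ℝ) ≤ |ev n k| ^ z := by positivity
    have hxy : |ef n k (y:ℕ)| * |ef n k (s:ℕ)| ≤ 1 :=
      mul_le_one₀ h2 (abs_nonneg _) h3
    exact mul_le_of_le_one_right h4 hxy
  calc (1 / 2) * ∑ s : Fin n, |Amat n z y s - 1 / (n : ℝ)|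
      ≤ (1 / 2) * ∑ _s : Fin n, (2 / n) * ∑ k ∈ Ico 1 n, |ev n k| ^ z := by
        refine mul_le_mul_of_nonneg_left ?_ (by norm_num)
        exact Finset.sum_le_sum fun s _ => hterm s
    _ = ∑ k ∈ Ico 1 n, |ev n k| ^ z := by
        rw [Finset.sum_const, Finset.card_univ, Fintype.card_fin, nsmul_eq_mul]
        field_simp

lemma geom_bound (n : ℕ) {q : ℝ} (hq0 : 0 ≤ q) (hq1 : q < 1) :
    ∑ k ∈ Ico 1 n, (q ^ k + q ^ (n - k)) ≤ 2 * (q / (1 - q)) := by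
  have h1q : (0:ℝ) < 1 - q := by linarith
  have hgeom : ∀ m : ℕ, ∑ j ∈ range m, q ^ j ≤ 1 / (1 - q) := by
    intro m
    have hne : q ≠ 1 := ne_of_lt hq1
    rw [geom_sum_eq hne]
    have heq : (q ^ m - 1) / (q - 1) = (1 - q ^ m) / (1 - q) := by
      rw [div_eq_div_iff (by intro h; apply hne; linarith) (ne_of_gt h1q)]
      ring
    rw [heq]
    have hqm : 0 ≤ q ^ m := by positivity
    rw [div_le_div_iff₀ h1q h1q]
    nlinarith
  have hsum1 : ∑ k ∈ Ico 1 n, q ^ k ≤ q / (1 - q) := by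
    rw [Finset.sum_Ico_eq_sum_range]
    have : ∀ j ∈ range (n - 1), q ^ (1 + j) = q * q ^ j := by
      intro j _; rw [pow_add, pow_one]
    rw [Finset.sum_congr rfl this, ← Finset.mul_sum]
    rw [div_eq_mul_one_div]
    exact mul_le_mul_of_nonneg_left (hgeom _) hq0
  have hsum2 : ∑ k ∈ Ico 1 n, q ^ (n - k) ≤ q / (1 - q) := by
    rw [Finset.sum_Ico_eq_sum_range]
    have h1 : ∀ j ∈ range (n - 1), q ^ (n - (1 + j)) = q * q ^ (n - 1 - 1 - j) := by
      intro j hj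
      rw [Finset.mem_range] at hj
      rw [← pow_succ']
      congr 1
      omega
    rw [Finset.sum_congr rfl h1, ← Finset.mul_sum]
    have h2 : ∑ j ∈ range (n - 1), q ^ (n - 1 - 1 - j) = ∑ j ∈ range (n - 1), q ^ j := by
      exact Finset.sum_range_reflect (fun j => q ^ j) (n - 1)
    rw [h2, div_eq_mul_one_div]
    exact mul_le_mul_of_nonneg_left (hgeom _) hq0
  rw [Finset.sum_add_distrib]
  linarith



lemma eig_pow (n : ℕ) (hn : 2 ≤ n) (y : Fin n) (z : ℕ) :
    ∑ s : Fin n, ((metroM n) ^ z) y s * ef n 1 (s : ℕ) =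
      (ev n 1) ^ z * ef n 1 (y : ℕ) := by
  induction z with
  | zero =>
    rw [pow_zero]
    simp only [Matrix.one_apply]
    rw [Finset.sum_congr rfl (fun s _ => by
      rw [ite_mul, one_mul, zero_mul] :
      ∀ s ∈ Finset.univ, (if y = s then (1:ℝ) else 0) * ef n 1 (s : ℕ) =
        if y = s then ef n 1 (s : ℕ) else 0)]
    rw [Finset.sum_ite_eq]
    simp
  | succ z ih =>
    rw [pow_succ]
    have hexp : ∀ s : Fin n, ((metroM n) ^ z * metroM n) y s * ef n 1 (s : ℕ) =
        ∑ t : Fin n, ((metroM n) ^ z) y t * (metroM n t s * ef n 1 (s : ℕ)) := by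
      intro s
      rw [Matrix.mul_apply, Finset.sum_mul]
      exact Finset.sum_congr rfl fun t _ => by ring
    rw [Finset.sum_congr rfl fun s _ => hexp s, Finset.sum_comm]
    have hin : ∀ t : Fin n, ∑ s : Fin n, ((metroM n) ^ z) y t * (metroM n t s * ef n 1 (s : ℕ))
        = ((metroM n) ^ z) y t * (ev n 1 * ef n 1 (t : ℕ)) := by
      intro t
      rw [← Finset.mul_sum, eigen n hn 1 t]
    rw [Finset.sum_congr rfl fun t _ => hin t]
    have : ∑ t : Fin n, ((metroM n) ^ z) y t * (ev n 1 * ef n 1 (t : ℕ))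
        = ev n 1 * ∑ t : Fin n, ((metroM n) ^ z) y t * ef n 1 (t : ℕ) := by
      rw [Finset.mul_sum]
      exact Finset.sum_congr rfl fun t _ => by ring
    rw [this, ih, pow_succ]
    ring

lemma zsum (n : ℕ) (hn : 2 ≤ n) : ∑ s : Fin n, ef n 1 (s : ℕ) = 0 := by
  have hnR : (0:ℝ) < (n:ℝ) := by positivity
  rw [Fin.sum_univ_eq_sum_range (fun j => ef n 1 j) n]
  have htel : ∀ m : ℕ, ∑ j ∈ range m,
      (Real.sin (((j:ℝ) + 1) * π / n) - Real.sin ((j:ℝ) * π / n)) =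
      Real.sin ((m:ℝ) * π / n) - Real.sin 0 := by
    intro m
    induction m with
    | zero => simp
    | succ m ih =>
      rw [sum_range_succ, ih]
      have : ((m:ℝ) + 1) * π / n = (((m + 1 : ℕ)):ℝ) * π / n := by push_cast; ring
      rw [this]
      ring
  have hkey : (∑ j ∈ range n, ef n 1 j) * (2 * Real.sin (π / (2 * n))) = 0 := by
    rw [Finset.sum_mul]
    have hterm : ∀ j ∈ range n, ef n 1 j * (2 * Real.sin (π / (2 * n))) =
        Real.sin (((j:ℝ) + 1) * π / n) - Real.sin ((j:ℝ) * π / n) := by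
      intro j _
      unfold ef
      have e1 : ((j:ℝ) + 1) * π / n = (1:ℕ) * π * (2 * (j:ℝ) + 1) / (2 * n) + π / (2 * n) := by
        push_cast; field_simp; ring
      have e2 : (j:ℝ) * π / n = (1:ℕ) * π * (2 * (j:ℝ) + 1) / (2 * n) - π / (2 * n) := by
        push_cast; field_simp; ring
      rw [e1, e2, Real.sin_add, Real.sin_sub]
      push_cast
      ring
    rw [Finset.sum_congr rfl hterm, htel n]
    have : (n:ℝ) * π / n = π := by field_simp
    rw [this, Real.sin_pi, Real.sin_zero]
    ring
  have hspos : 0 < Real.sin (π / (2 * n)) := by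
    apply Real.sin_pos_of_pos_of_lt_pi
    · positivity
    · rw [div_lt_iff₀ (by positivity)]
      have h2R : (2:ℝ) ≤ (n:ℝ) := by exact_mod_cast hn
      nlinarith [Real.pi_pos]
  have h2 : (2 * Real.sin (π / (2 * n))) ≠ 0 := by positivity
  exact (mul_eq_zero.mp hkey).resolve_right h2

set_option maxHeartbeats 1000000 in
lemma lower (n : ℕ) (hn : 10 ≤ n) (y : Fin n) (hy0 : (y : ℕ) = 0)
    (z : ℕ) (hz : (z:ℝ) ≤ (1/20) * (n:ℝ) ^ 2) :
    3 / 16 ≤ (1 / 2) * ∑ s : Fin n, |((metroM n) ^ z) y s - 1 / (n : ℝ)| := by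
  have hn2 : 2 ≤ n := by omega
  have hnR : (0:ℝ) < (n:ℝ) := by positivity
  have hnR10 : (10:ℝ) ≤ (n:ℝ) := by exact_mod_cast hn
  have hval := eig_pow n hn2 y z
  have hzsum : ∑ s : Fin n, (1 / (n:ℝ)) * ef n 1 (s : ℕ) = 0 := by
    rw [← Finset.mul_sum, zsum n hn2, mul_zero]
  have hdiff : (ev n 1) ^ z * ef n 1 (y : ℕ) =
      ∑ s : Fin n, (((metroM n) ^ z) y s - 1 / (n:ℝ)) * ef n 1 (s : ℕ) := by
    rw [← hval]
    rw [← sub_zero (∑ s : Fin n, ((metroM n) ^ z) y s * ef n 1 (s : ℕ)), ← hzsum,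
      ← Finset.sum_sub_distrib]
    exact Finset.sum_congr rfl fun s _ => by ring
  have habs : (ev n 1) ^ z * ef n 1 (y : ℕ) ≤
      ∑ s : Fin n, |((metroM n) ^ z) y s - 1 / (n:ℝ)| := by
    rw [hdiff]
    refine (le_abs_self _).trans ?_
    refine (Finset.abs_sum_le_sum_abs _ _).trans ?_
    apply Finset.sum_le_sum
    intro s _
    rw [abs_mul]
    exact mul_le_of_le_one_right (abs_nonneg _) (Real.abs_cos_le_one _)
  -- numeric bounds
  have hpi4 := Real.pi_le_four
  have hpipos := Real.pi_pos
  have hef : (1:ℝ) / 2 ≤ ef n 1 (y : ℕ) := by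
    unfold ef
    rw [hy0]
    have harg : ((1:ℕ):ℝ) * π * (2 * ((0:ℕ):ℝ) + 1) / (2 * n) = π / (2 * n) := by
      push_cast; ring
    rw [harg]
    have hle := Real.one_sub_sq_div_two_le_cos (x := π / (2 * n))
    have hsmall : (π / (2 * (n:ℝ))) ^ 2 / 2 ≤ 1 / 2 := by
      have h1 : π / (2 * (n:ℝ)) ≤ 4 / 20 := by
        rw [div_le_div_iff₀ (by positivity) (by norm_num)]
        nlinarith
      have h0 : 0 ≤ π / (2 * (n:ℝ)) := by positivity
      nlinarith
    linarith
  have hev : (3:ℝ) / 4 ≤ (ev n 1) ^ z := by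
    have hu : (ev n 1 : ℝ) ≥ 1 - π ^ 2 / (2 * (n:ℝ) ^ 2) := by
      unfold ev
      have harg : ((1:ℕ):ℝ) * π / n = π / n := by push_cast; ring
      rw [harg]
      have := Real.one_sub_sq_div_two_le_cos (x := π / n)
      have heq : (π / (n:ℝ)) ^ 2 / 2 = π ^ 2 / (2 * (n:ℝ) ^ 2) := by
        field_simp
      linarith [heq ▸ this]
    have hupos : 0 ≤ 1 - π ^ 2 / (2 * (n:ℝ) ^ 2) := by
      have : π ^ 2 / (2 * (n:ℝ) ^ 2) ≤ 16 / 200 := by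
        rw [div_le_div_iff₀ (by positivity) (by norm_num)]
        nlinarith
      linarith
    have hpow : (1 - π ^ 2 / (2 * (n:ℝ) ^ 2)) ^ z ≤ (ev n 1) ^ z :=
      pow_le_pow_left₀ hupos hu z
    have hbern : 1 + (z:ℝ) * (-(π ^ 2 / (2 * (n:ℝ) ^ 2))) ≤
        (1 + (-(π ^ 2 / (2 * (n:ℝ) ^ 2)))) ^ z := by
      apply one_add_mul_le_pow
      have : π ^ 2 / (2 * (n:ℝ) ^ 2) ≤ 16 / 200 := by
        rw [div_le_div_iff₀ (by positivity) (by norm_num)]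
        nlinarith
      linarith
    have hzu : (z:ℝ) * (π ^ 2 / (2 * (n:ℝ) ^ 2)) ≤ π ^ 2 / 40 := by
      have hupos2 : 0 ≤ π ^ 2 / (2 * (n:ℝ) ^ 2) := by positivity
      calc (z:ℝ) * (π ^ 2 / (2 * (n:ℝ) ^ 2))
          ≤ ((1/20) * (n:ℝ) ^ 2) * (π ^ 2 / (2 * (n:ℝ) ^ 2)) :=
            mul_le_mul_of_nonneg_right hz hupos2
        _ = π ^ 2 / 40 := by field_simp; ring
    have hpisq : π ^ 2 ≤ 10 := by
      nlinarith [Real.pi_lt_d2]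
    have h34 : (3:ℝ)/4 ≤ 1 + (z:ℝ) * (-(π ^ 2 / (2 * (n:ℝ) ^ 2))) := by
      nlinarith
    calc (3:ℝ)/4 ≤ 1 + (z:ℝ) * (-(π ^ 2 / (2 * (n:ℝ) ^ 2))) := h34
      _ ≤ (1 + (-(π ^ 2 / (2 * (n:ℝ) ^ 2)))) ^ z := hbern
      _ = (1 - π ^ 2 / (2 * (n:ℝ) ^ 2)) ^ z := by rw [← sub_eq_add_neg]
      _ ≤ (ev n 1) ^ z := hpow
  have hprod : (3:ℝ) / 8 ≤ (ev n 1) ^ z * ef n 1 (y : ℕ) := by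
    have h1 : (0:ℝ) ≤ (ev n 1) ^ z := by linarith
    nlinarith
  linarith [habs, hprod]


end MetroAux

open MetroAux Real Finset in
/-- for the Metropolis chain on `{1,…,n}` with uniform target, convergence
to stationarity takes order `n²` steps:
(i) for every `δ > 0` there is `b > 0` such that for all `n ≥ 2`, all starting states
`y`, and all `z ≥ b n²`, `‖M^z(y,·) − U_n‖ < δ`;
(ii) there are `a > 0` and `δ₀ > 0` such that for all sufficiently large `n` there is a
starting state `y` with `‖M^z(y,·) − U_n‖ ≥ δ₀` for every `z ≤ a n²`. -/
theorem metropolis_uniform_order_n_sq :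
    (∀ δ : ℝ, 0 < δ →
      ∃ b : ℝ, 0 < b ∧ ∀ n : ℕ, 2 ≤ n → ∀ y : Fin n, ∀ z : ℕ,
        b * (n : ℝ) ^ 2 ≤ (z : ℝ) →
        (1 / 2) * ∑ s : Fin n, |((metroM n) ^ z) y s - 1 / (n : ℝ)| < δ) ∧
    (∃ a δ₀ : ℝ, 0 < a ∧ 0 < δ₀ ∧ ∃ N : ℕ, ∀ n : ℕ, N ≤ n →
      ∃ y : Fin n, ∀ z : ℕ, (z : ℝ) ≤ a * (n : ℝ) ^ 2 →
        δ₀ ≤ (1 / 2) * ∑ s : Fin n, |((metroM n) ^ z) y s - 1 / (n : ℝ)|) := by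
  constructor
  · -- upper bound
    intro δ hδ
    refine ⟨max 1 (Real.log (5 / δ)), lt_of_lt_of_le one_pos (le_max_left _ _), ?_⟩
    intro n hn y z hz
    set b : ℝ := max 1 (Real.log (5 / δ)) with hbdef
    have hb1 : (1:ℝ) ≤ b := le_max_left _ _
    have hb : 0 < b := lt_of_lt_of_le one_pos hb1
    set q : ℝ := Real.exp (-2 * b) with hqdef
    have hq0 : 0 ≤ q := le_of_lt (Real.exp_pos _)
    have hqhalf : q < 1 / 2 := by
      have h1 : q ≤ Real.exp (-2) := Real.exp_le_exp.mpr (by linarith)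
      have h2 : (3:ℝ) ≤ Real.exp 2 := by
        have := Real.add_one_le_exp (2:ℝ)
        linarith
      have h3 : Real.exp (-2) = (Real.exp 2)⁻¹ := Real.exp_neg 2
      have h4 : (Real.exp 2)⁻¹ ≤ 1/3 := by
        rw [inv_le_comm₀ (by positivity) (by norm_num)]
        linarith
      linarith
    have hq1 : q < 1 := by linarith
    have step1 := dist_le n hn y z
    have step2 : ∑ k ∈ Ico 1 n, |ev n k| ^ z ≤
        ∑ k ∈ Ico 1 n, (q ^ k + q ^ (n - k)) := by
      apply Finset.sum_le_sum
      intro k hk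
      rw [Finset.mem_Ico] at hk
      exact ev_pow_le n k z hn hk.1 hk.2 hb hz
    have step3 := geom_bound n hq0 hq1
    have step4 : q / (1 - q) ≤ 2 * q := by
      rw [div_le_iff₀ (by linarith)]
      nlinarith
    have step5 : 4 * q < δ := by
      rcases le_or_gt δ 5 with hδ5 | hδ5
      · have hlog : Real.log (5 / δ) ≤ b := le_max_right _ _
        have h5δ : (0:ℝ) < 5 / δ := by positivity
        have h6 : q ≤ Real.exp (-Real.log (5 / δ)) :=
          Real.exp_le_exp.mpr (by linarith)
        have h7 : Real.exp (-Real.log (5 / δ)) = δ / 5 := by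
          rw [Real.exp_neg, Real.exp_log h5δ]
          rw [inv_div]
        rw [h7] at h6
        linarith
      · linarith
    calc (1 / 2) * ∑ s : Fin n, |((metroM n) ^ z) y s - 1 / (n : ℝ)|
        ≤ ∑ k ∈ Ico 1 n, |ev n k| ^ z := step1
      _ ≤ ∑ k ∈ Ico 1 n, (q ^ k + q ^ (n - k)) := step2
      _ ≤ 2 * (q / (1 - q)) := step3
      _ ≤ 4 * q := by linarith
      _ < δ := step5
  · -- lower bound
    refine ⟨1/20, 3/16, by norm_num, by norm_num, 10, ?_⟩
    intro n hn
    refine ⟨⟨0, by omega⟩, ?_⟩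
    intro z hz
    exact lower n hn ⟨0, by omega⟩ rfl z hz
end
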